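/- arXiv:2603.05055 — 6 statements merged into one kernel-verified Lean document; each statement's English description precedes it below -/
import Mathlib

section
/- Fix a normal modal logic Λ of Type A or Type B, and M ⊆ {◇,□}. It is decidable, given two finite M-simple sets of modal formulas Φ and Ψ, whether ML_Φ ≼^Λ ML_Ψ. -/
set_option maxHeartbeats 1000000

/-! ### Modal formulas -/

inductive MF : Type
  | var : ℕ → MF
  | neg : MF → MF
  | and : MF → MF → MF
  | or : MF → MF → MF
  | dia : MF → MF
  | box : MF → MF

namespace MF

/-- Implication `φ → ψ`, as the abbreviation `¬φ ∨ ψ`. -/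
def imp (φ ψ : MF) : MF := .or (.neg φ) ψ

/-- Bi-implication `φ ↔ ψ`. -/
def iff (φ ψ : MF) : MF := .and (φ.imp ψ) (ψ.imp φ)

/-- `⊥` abbreviates `p ∧ ¬p`. -/
def bot : MF := .and (.var 0) (.neg (.var 0))

/-- `⊤` abbreviates `p ∨ ¬p`. -/
def top : MF := .or (.var 0) (.neg (.var 0))

/-- A formula is purely propositional if it contains no modal operators. -/
def isProp : MF → Prop
  | .var _ => True
  | .neg φ => φ.isProp
  | .and φ ψ => φ.isProp ∧ ψ.isProp
  | .or φ ψ => φ.isProp ∧ ψ.isProp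
  | .dia _ => False
  | .box _ => False

/-- Boolean evaluation (meaningful for purely propositional formulas). -/
def propEval (v : ℕ → Bool) : MF → Bool
  | .var n => v n
  | .neg φ => !(propEval v φ)
  | .and φ ψ => propEval v φ && propEval v ψ
  | .or φ ψ => propEval v φ || propEval v ψ
  | .dia φ => propEval v φ
  | .box φ => propEval v φ

/-- Propositional tautologies. -/
def isTautology (φ : MF) : Prop := φ.isProp ∧ ∀ v, φ.propEval v = true

/-- Uniform substitution. -/
def subst (σ : ℕ → MF) : MF → MF
  | .var n => σ n
  | .neg φ => .neg (φ.subst σ)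
  | .and φ ψ => .and (φ.subst σ) (ψ.subst σ)
  | .or φ ψ => .or (φ.subst σ) (ψ.subst σ)
  | .dia φ => .dia (φ.subst σ)
  | .box φ => .box (φ.subst σ)

/-- The set of propositional variables occurring in a formula. -/
def vars : MF → Set ℕ
  | .var n => {n}
  | .neg φ => φ.vars
  | .and φ ψ => φ.vars ∪ ψ.vars
  | .or φ ψ => φ.vars ∪ ψ.vars
  | .dia φ => φ.vars
  | .box φ => φ.vars

/-- Kripke satisfaction. -/
def sat {W : Type} (R : W → W → Prop) (V : ℕ → W → Prop) : MF → W → Prop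
  | .var n, w => V n w
  | .neg φ, w => ¬ sat R V φ w
  | .and φ ψ, w => sat R V φ w ∧ sat R V ψ w
  | .or φ ψ, w => sat R V φ w ∨ sat R V ψ w
  | .dia φ, w => ∃ u, R w u ∧ sat R V φ u
  | .box φ, w => ∀ u, R w u → sat R V φ u

/-- `◇^n φ`. -/
def diaIter : ℕ → MF → MF
  | 0, φ => φ
  | n + 1, φ => .dia (diaIter n φ)

/-- `□^n φ`. -/
def boxIter : ℕ → MF → MF
  | 0, φ => φ
  | n + 1, φ => .box (boxIter n φ)

/-- `◇^{≤n} φ`, the disjunction of `◇^k φ` for `0 ≤ k ≤ n`. -/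
def diaLe : ℕ → MF → MF
  | 0, φ => φ
  | n + 1, φ => .or (diaLe n φ) (diaIter (n + 1) φ)

/-- An injective numeric encoding of modal formulas. -/
def encodeMF : MF → ℕ
  | .var n => Nat.pair 0 n
  | .neg φ => Nat.pair 1 φ.encodeMF
  | .and φ ψ => Nat.pair 2 (Nat.pair φ.encodeMF ψ.encodeMF)
  | .or φ ψ => Nat.pair 3 (Nat.pair φ.encodeMF ψ.encodeMF)
  | .dia φ => Nat.pair 4 φ.encodeMF
  | .box φ => Nat.pair 5 φ.encodeMF

end MF

/-- A normal modal logic. -/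
structure NormalLogic (Λ : Set MF) : Prop where
  taut : ∀ φ, φ.isTautology → φ ∈ Λ
  axK : ∀ φ ψ, ((MF.box (φ.imp ψ)).imp ((MF.box φ).imp (MF.box ψ))) ∈ Λ
  dual : ∀ φ, ((MF.dia φ).iff (MF.neg (MF.box (MF.neg φ)))) ∈ Λ
  mp : ∀ φ ψ, φ.imp ψ ∈ Λ → φ ∈ Λ → ψ ∈ Λ
  usubst : ∀ φ (σ : ℕ → MF), φ ∈ Λ → φ.subst σ ∈ Λ
  nec : ∀ φ, φ ∈ Λ → MF.box φ ∈ Λ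

/-- Validity on the frame `F_⊙` consisting of a single reflexive world. -/
def validOnReflPoint (φ : MF) : Prop :=
  ∀ V : ℕ → Prop, MF.sat (W := Unit) (fun _ _ => True) (fun n _ => V n) φ ()

/-- Validity on the frame `F_•` consisting of a single irreflexive world. -/
def validOnIrreflPoint (φ : MF) : Prop :=
  ∀ V : ℕ → Prop, MF.sat (W := Unit) (fun _ _ => False) (fun n _ => V n) φ ()

/-- Type A: `F_⊙ ⊨ Λ`. -/
def TypeA (Λ : Set MF) : Prop := ∀ φ ∈ Λ, validOnReflPoint φ

/-- Type B: `F_• ⊨ Λ` and `Λ ⊢ □^n ⊥` for some `n ≥ 1`. -/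
def TypeB (Λ : Set MF) : Prop :=
  (∀ φ ∈ Λ, validOnIrreflPoint φ) ∧ ∃ n ≥ 1, MF.boxIter n MF.bot ∈ Λ

/-- Type C: `F_• ⊨ Λ`, `Λ ⊬ □^n ⊥` for all `n ≥ 1`, `Λ ⊢ ◇^{≤n} □⊥` for some `n ≥ 1`. -/
def TypeC (Λ : Set MF) : Prop :=
  (∀ φ ∈ Λ, validOnIrreflPoint φ) ∧ (∀ n ≥ 1, MF.boxIter n MF.bot ∉ Λ) ∧
    ∃ n ≥ 1, MF.diaLe n (MF.box MF.bot) ∈ Λ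

/-- The (expansions of the) fragment `ML_Φ`: the smallest set of modal formulas containing
all propositional variables and closed under applying the connectives given by the formulas in
`Φ` (i.e., substituting fragment formulas into a member of `Φ`). -/
inductive MLFrag (Φ : Set MF) : MF → Prop
  | var (n : ℕ) : MLFrag Φ (MF.var n)
  | app (φ : MF) (hφ : φ ∈ Φ) (σ : ℕ → MF) (hσ : ∀ n, MLFrag Φ (σ n)) :
      MLFrag Φ (φ.subst σ)

/-- Expressive containment `ML_Φ ≼^Λ ML_Ψ`. -/
def exprLe (Λ : Set MF) (Φ Ψ : Set MF) : Prop :=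
  ∀ φ, MLFrag Φ φ → ∃ ψ, MLFrag Ψ ψ ∧ (φ.iff ψ) ∈ Λ

/-- Expressive equivalence with respect to `Λ`. -/
def exprEq (Λ : Set MF) (Φ Ψ : Set MF) : Prop := exprLe Λ Φ Ψ ∧ exprLe Λ Ψ Φ

/-- The minimal normal modal logic `K`: (semantically) the set of formulas valid in all
Kripke models. -/
def KLogic : Set MF :=
  {φ | ∀ (W : Type) (R : W → W → Prop) (V : ℕ → W → Prop) (w : W), MF.sat R V φ w}

/-! ### Boolean functions and clones -/

/-- A Boolean function of positive arity. -/
structure BFun : Type where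
  arity : ℕ
  arity_pos : 0 < arity
  eval : (Fin arity → Bool) → Bool

/-- A Boolean clone: a set of Boolean functions containing all projections and
closed under composition. -/
def IsClone (C : Set BFun) : Prop :=
  (∀ (n : ℕ) (hn : 0 < n) (k : Fin n), (⟨n, hn, fun v => v k⟩ : BFun) ∈ C) ∧
  (∀ f ∈ C, ∀ (m : ℕ) (hm : 0 < m) (g : Fin (BFun.arity f) → (Fin m → Bool) → Bool),
    (∀ i, (⟨m, hm, g i⟩ : BFun) ∈ C) →
    (⟨m, hm, fun v => f.eval (fun i => g i v)⟩ : BFun) ∈ C)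

/-- The clone generated by a set of Boolean functions. -/
def cloneGen (O : Set BFun) : Set BFun := ⋂₀ {C : Set BFun | IsClone C ∧ O ⊆ C}

/-- `O ≼ O'`: the clone generated by `O` is contained in the clone generated by `O'`. -/
def cloneLe (O O' : Set BFun) : Prop := cloneGen O ⊆ cloneGen O'

/-- The constant-true unary Boolean function. -/
def bfTop : BFun := ⟨1, Nat.one_pos, fun _ => true⟩
/-- The constant-false unary Boolean function. -/
def bfBot : BFun := ⟨1, Nat.one_pos, fun _ => false⟩
/-- Negation. -/
def bfNot : BFun := ⟨1, Nat.one_pos, fun v => !(v 0)⟩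
/-- Binary conjunction. -/
def bfAnd : BFun := ⟨2, Nat.succ_pos 1, fun v => v 0 && v 1⟩
/-- Binary disjunction. -/
def bfOr : BFun := ⟨2, Nat.succ_pos 1, fun v => v 0 || v 1⟩
/-- Ternary exclusive or `x ⊕ y ⊕ z`. -/
def bf3Xor : BFun := ⟨3, Nat.succ_pos 2, fun v => (v 0).xor ((v 1).xor (v 2))⟩
/-- `oxor(x,y,z) = x ∨ (y ⊕ z)`. -/
def bfOxor : BFun := ⟨3, Nat.succ_pos 2, fun v => v 0 || ((v 1).xor (v 2))⟩
/-- `aimp(x,y,z) = x ∧ (y → z)`. -/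
def bfAimp : BFun := ⟨3, Nat.succ_pos 2, fun v => v 0 && (!(v 1) || v 2)⟩

/-- The (purely propositional) formula `φ` defines the Boolean function `f`. -/
def definesBF (φ : MF) (f : BFun) : Prop :=
  φ.isProp ∧ ∀ v : ℕ → Bool, φ.propEval v = f.eval (fun i => v i.val)

/-- The generating set of formulas of the simple fragment `ML_{M ∪ O}`, where
`M ⊆ {◇,□}` is specified by the two Booleans `hd` (for `◇`) and `hb` (for `□`). -/
def MOgen (hd hb : Bool) (O : Set BFun) : Set MF :=
  {φ | (hd = true ∧ φ = MF.dia (MF.var 0)) ∨ (hb = true ∧ φ = MF.box (MF.var 0)) ∨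
    ∃ f ∈ O, definesBF φ f}

/-- `Clos^Λ_M(O)`: the set of Boolean functions `f` such that some propositional formula
defining `f` is `Λ`-equivalent to some `ML_{M ∪ O}`-formula. -/
def Clos (Λ : Set MF) (hd hb : Bool) (O : Set BFun) : Set BFun :=
  {f | ∃ φ ψ : MF, definesBF φ f ∧ MLFrag (MOgen hd hb O) ψ ∧ (φ.iff ψ) ∈ Λ}

/-- `β(Φ)`: the set of Boolean functions defined by propositional formulas in `Φ`. -/
def betaBF (Φ : Set MF) : Set BFun := {f | ∃ φ ∈ Φ, definesBF φ f}

/-- A set of modal formulas is simple if each member is `◇x`, `□x`, or purely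
propositional. -/
def IsSimpleSet (Φ : Set MF) : Prop :=
  ∀ φ ∈ Φ, (∃ n, φ = MF.dia (MF.var n)) ∨ (∃ n, φ = MF.box (MF.var n)) ∨ φ.isProp

/-- `Φ` is `M`-simple (with `M` given by `hd`, `hb`): simple, and the modal operators
among its members are exactly those in `M`. -/
def IsMSimpleSet (hd hb : Bool) (Φ : Set MF) : Prop :=
  IsSimpleSet Φ ∧ ((∃ n, MF.dia (MF.var n) ∈ Φ) ↔ hd = true) ∧
    ((∃ n, MF.box (MF.var n) ∈ Φ) ↔ hb = true)

/-! ### Propositional fragments `PL_O` -/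

/-- Formulas of the propositional fragment `PL_O`. -/
inductive PLF (O : Set BFun) : Type
  | var : ℕ → PLF O
  | app : (f : BFun) → f ∈ O → (Fin f.arity → PLF O) → PLF O

namespace PLF

variable {O : Set BFun}

/-- Evaluation of a `PL_O`-formula under a truth assignment. -/
def eval (v : ℕ → Bool) : PLF O → Bool
  | .var n => v n
  | .app f _ args => f.eval (fun i => (args i).eval v)

/-- The variables occurring in a `PL_O`-formula. -/
def pvars : PLF O → Set ℕ
  | .var n => {n}
  | .app _ _ args => ⋃ i, (args i).pvars

/-- The set of subformulas of a `PL_O`-formula. -/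
def subf : PLF O → Set (PLF O)
  | .var n => {PLF.var n}
  | .app f h args => insert (PLF.app f h args) (⋃ i, (args i).subf)

/-- `|φ|_dag`: the number of distinct subformulas. -/
noncomputable def dagSize (φ : PLF O) : ℕ := φ.subf.ncard

/-- Equivalence of propositional formulas. -/
def equivPLF (φ ψ : PLF O) : Prop := ∀ v, φ.eval v = ψ.eval v

/-- `φ` fits the labeled example `(V, lab)`. -/
def fits (φ : PLF O) (e : (ℕ → Bool) × Bool) : Prop := φ.eval e.1 = e.2

end PLF

/-- `E` uniquely characterizes `φ` with respect to the class `L` of formulas. -/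
def uniqCharPL {O : Set BFun} (φ : PLF O) (L : Set (PLF O))
    (E : Set ((ℕ → Bool) × Bool)) : Prop :=
  (∀ e ∈ E, φ.fits e) ∧ ∀ ψ ∈ L, (∀ e ∈ E, ψ.fits e) → φ.equivPLF ψ

/-! ### Concept classes and PC-reductions -/

/-- A concept `c` fits the labeled example `(e, lab)`. -/
def ccFits {C : Type*} {E : Type*} (l : C → Set E) (c : C) (e : E × Bool) : Prop :=
  e.1 ∈ l c ↔ e.2 = true

/-- `S` uniquely characterizes the concept `c` within the concept class given by `l`. -/
def ccUniqChar {C : Type*} {E : Type*} (l : C → Set E) (c : C) (S : Set (E × Bool)) : Prop :=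
  (∀ e ∈ S, ccFits l c e) ∧ ∀ c', (∀ e ∈ S, ccFits l c' e) → l c' = l c

/-- A PC-reduction between concept classes. -/
structure PCRed {C1 : Type*} {E1 : Type*} {C2 : Type*} {E2 : Type*}
    (l1 : C1 → Set E1) (l2 : C2 → Set E2) where
  fc : C1 → C2
  he : E1 → E2
  cond1 : ∀ c e, e ∈ l1 c ↔ he e ∈ l2 (fc c)
  cond2 : ∀ e : E2, (∀ c, e ∈ l2 (fc c)) ∨ (∀ c, e ∉ l2 (fc c)) ∨
    ∃ e' : E1, {c | e ∈ l2 (fc c)} = {c | e' ∈ l1 c}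

/-- Extend an assignment on `PROP` to all variables (by `false` elsewhere). -/
def extAssign (PROP : Finset ℕ) (v : {x // x ∈ PROP} → Bool) : ℕ → Bool :=
  fun n => if h : n ∈ PROP then v ⟨n, h⟩ else false

/-- The concept class `PL_O[PROP]`: concepts are `PL_O`-formulas with variables in `PROP`,
examples are truth assignments on `PROP`. -/
def plSem (O : Set BFun) (PROP : Finset ℕ) :
    {φ : PLF O // φ.pvars ⊆ ↑PROP} → Set ({x // x ∈ PROP} → Bool) :=
  fun φ => {v | φ.1.eval (extAssign PROP v) = true}

/-! ### Simple modal fragments as syntax, and finite pointed Kripke models -/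

/-- Formulas of the simple modal fragment `ML_{M ∪ O}` (as a syntax): Boolean connectives
from `O`, plus `◇` if `hd` and `□` if `hb`. -/
inductive MLF (O : Set BFun) (hd hb : Bool) : Type
  | var : ℕ → MLF O hd hb
  | app : (f : BFun) → f ∈ O → (Fin f.arity → MLF O hd hb) → MLF O hd hb
  | dia : hd = true → MLF O hd hb → MLF O hd hb
  | box : hb = true → MLF O hd hb → MLF O hd hb

/-- Propositional application of a Boolean function to propositions. -/
def BFun.evalP (f : BFun) (P : Fin f.arity → Prop) : Prop :=
  f.eval (fun i => @decide (P i) (Classical.propDecidable _)) = true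

namespace MLF

variable {O : Set BFun} {hd hb : Bool}

/-- Kripke satisfaction for simple-fragment formulas. -/
def msat {W : Type} (R : W → W → Prop) (V : ℕ → W → Prop) :
    MLF O hd hb → W → Prop
  | .var n, w => V n w
  | .app f _ args, w => f.evalP (fun i => msat R V (args i) w)
  | .dia _ φ, w => ∃ u, R w u ∧ msat R V φ u
  | .box _ φ, w => ∀ u, R w u → msat R V φ u

/-- Variables of a simple-fragment formula. -/
def mvars : MLF O hd hb → Set ℕ
  | .var n => {n}
  | .app _ _ args => ⋃ i, (args i).mvars
  | .dia _ φ => φ.mvars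
  | .box _ φ => φ.mvars

end MLF

/-- A finite pointed Kripke model. -/
structure FPModel : Type 1 where
  W : Type
  fin : Finite W
  R : W → W → Prop
  V : ℕ → W → Prop
  pt : W

/-- The concept class `ML_{O,∘}[{p}]` (with `p` the variable `0`): concepts are
simple-fragment formulas over the single variable `p`, examples are finite pointed
Kripke models. -/
def mlSem (O : Set BFun) (hd hb : Bool) :
    {φ : MLF O hd hb // φ.mvars ⊆ {0}} → Set FPModel :=
  fun φ => {M | MLF.msat M.R M.V φ.1 M.pt}

/-- Satisfaction of a modal formula in a finite pointed Kripke model. -/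
def msatMF (M : FPModel) (φ : MF) : Prop := MF.sat M.R M.V φ M.pt

/-- A modal formula fits a labeled example (a finite pointed model with a label). -/
def fitsMF (φ : MF) (e : FPModel × Bool) : Prop := msatMF e.1 φ ↔ e.2 = true

/-- `K`-equivalence of modal formulas: truth at the same worlds of all Kripke models. -/
def KequivMF (φ ψ : MF) : Prop :=
  ∀ (W : Type) (R : W → W → Prop) (V : ℕ → W → Prop) (w : W),
    MF.sat R V φ w ↔ MF.sat R V ψ w

/-- `E` uniquely characterizes `φ` relative to the fragment `L` (with respect to `K`). -/
def uniqCharMF (φ : MF) (L : Set MF) (E : Set (FPModel × Bool)) : Prop :=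
  (∀ e ∈ E, fitsMF φ e) ∧ ∀ ψ ∈ L, (∀ e ∈ E, fitsMF ψ e) → KequivMF φ ψ

/-- `ML_Φ[P]`: the fragment generated by `Φ`, restricted to variables in `P`. -/
def fragSimple (Φ : Set MF) (P : Set ℕ) : Set MF :=
  {φ | MLFrag Φ φ ∧ φ.vars ⊆ P}

/-- `ML_{M∪O}[P]`. -/
def fragMO (hd hb : Bool) (O : Set BFun) (P : Set ℕ) : Set MF :=
  fragSimple (MOgen hd hb O) P

/-- For a simple set `Φ`: the modal operators of `Φ` are among those specified by
`hd`, `hb`, and `β(Φ)` is contained in the clone generated by `O`. -/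
def simpleLeOps (Φ : Set MF) (O : Set BFun) (hd hb : Bool) : Prop :=
  ((∃ n, MF.dia (MF.var n) ∈ Φ) → hd = true) ∧
  ((∃ n, MF.box (MF.var n) ∈ Φ) → hb = true) ∧
  cloneGen (betaBF Φ) ⊆ cloneGen O

/-- Decoding of a natural number as a labeled example (a finite pointed Kripke model with
a Boolean label). -/
def decodeEx (c : ℕ) : FPModel × Bool :=
  match Denumerable.ofNat (ℕ × List (ℕ × ℕ) × List (ℕ × ℕ) × ℕ × ℕ) c with
  | (n, edges, val, pt, b) =>
    (⟨Fin (n + 1), inferInstance,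
      fun u v => (u.val, v.val) ∈ edges,
      fun k w => (k, w.val) ∈ val,
      ⟨pt % (n + 1), Nat.mod_lt pt (Nat.succ_pos n)⟩⟩, b % 2 == 1)
/-!
On the one-point frame of Type A (reflexive) or Type B (irreflexive) every formula evaluates like
its erasure, in which `◇` and `□` are deleted, resp. replaced by `⊥` and `⊤`. So if
`ML_Φ ≼^Λ ML_Ψ`, every propositional member of `Φ` is tautologically equivalent to a term built
from the erasures of the members of `Ψ`. Conversely such terms are realised in `ML_Ψ` up to
`Λ`-equivalence (in Type B the constants come from `□ⁿp` and `◇ⁿp`, since `Λ ⊢ □ⁿ⊥`), and the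
operators `◇`, `□` of `Φ` also occur in `Ψ` by `M`-simplicity.

This condition is decidable: for `α ∈ Φ` in the variables `0, …, n-1`, close the truth tables of
the projections under the erased connectives of `Ψ`. There are only `2 ^ 2 ^ n` tables, so the
closure stabilises after that many rounds. Structural recursion over formulas is primitive
recursive on their codes (by course-of-values recursion), hence so is the whole test.
-/

namespace MF

@[simp] theorem subst_var (φ : MF) : φ.subst var = φ := by
  induction φ <;> simp_all [subst]

theorem subst_subst (φ : MF) (σ τ : ℕ → MF) :
    (φ.subst σ).subst τ = φ.subst fun n => (σ n).subst τ := by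
  induction φ <;> simp_all [subst]

theorem propEval_subst (v : ℕ → Bool) (φ : MF) (σ : ℕ → MF) :
    (φ.subst σ).propEval v = φ.propEval fun n => (σ n).propEval v := by
  induction φ <;> simp_all [subst, propEval]

theorem propEval_congr {v w : ℕ → Bool} {φ : MF} (h : ∀ k ∈ φ.vars, v k = w k) :
    φ.propEval v = φ.propEval w := by
  induction φ <;> simp_all [propEval, vars]

theorem propEval_iff (v : ℕ → Bool) (φ ψ : MF) :
    (φ.iff ψ).propEval v = true ↔ φ.propEval v = ψ.propEval v := by
  simp only [iff, imp, propEval]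
  cases φ.propEval v <;> cases ψ.propEval v <;> decide

theorem isTautology_iff_of_propEval_eq {φ ψ : MF} (hφ : φ.isProp) (hψ : ψ.isProp)
    (h : ∀ v, φ.propEval v = ψ.propEval v) : (φ.iff ψ).isTautology :=
  ⟨⟨⟨hφ, hψ⟩, hψ, hφ⟩, fun v => (propEval_iff v φ ψ).2 (h v)⟩

theorem isProp_subst {φ : MF} (hφ : φ.isProp) {σ : ℕ → MF} (hσ : ∀ n, (σ n).isProp) :
    (φ.subst σ).isProp := by
  induction φ <;> simp_all [subst, isProp]

theorem exists_mem_vars_of_mem_vars_subst {φ : MF} {σ : ℕ → MF} {j : ℕ}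
    (h : j ∈ (φ.subst σ).vars) : ∃ k ∈ φ.vars, j ∈ (σ k).vars := by
  induction φ with
  | var n => exact ⟨n, rfl, h⟩
  | neg φ ih | dia φ ih | box φ ih => exact ih h
  | and φ ψ ih₁ ih₂ | or φ ψ ih₁ ih₂ =>
    rcases h with h | h
    · obtain ⟨k, hk, hj⟩ := ih₁ h; exact ⟨k, Or.inl hk, hj⟩
    · obtain ⟨k, hk, hj⟩ := ih₂ h; exact ⟨k, Or.inr hk, hj⟩

end MF

namespace MLFrag

variable {Φ : Set MF}

theorem of_mem {φ : MF} (h : φ ∈ Φ) : MLFrag Φ φ := by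
  simpa using app φ h MF.var var

theorem isProp (hΦ : ∀ θ ∈ Φ, θ.isProp) {φ : MF} (hφ : MLFrag Φ φ) : φ.isProp := by
  induction hφ with
  | var n => trivial
  | app θ hθ σ _ ih => exact MF.isProp_subst (hΦ θ hθ) ih

theorem boxIter {m : ℕ} (hm : MF.box (MF.var m) ∈ Φ) {φ : MF} (hφ : MLFrag Φ φ) (k : ℕ) :
    MLFrag Φ (MF.boxIter k φ) := by
  induction k with
  | zero => exact hφ
  | succ k ih => exact app _ hm (fun _ => MF.boxIter k φ) fun _ => ih

theorem diaIter {m : ℕ} (hm : MF.dia (MF.var m) ∈ Φ) {φ : MF} (hφ : MLFrag Φ φ) (k : ℕ) :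
    MLFrag Φ (MF.diaIter k φ) := by
  induction k with
  | zero => exact hφ
  | succ k ih => exact app _ hm (fun _ => MF.diaIter k φ) fun _ => ih

end MLFrag

namespace NormalLogic

variable {Λ : Set MF} (hΛ : NormalLogic Λ)
include hΛ

open MF

theorem subst_mem_of_isTautology {P : MF} (hP : P.isTautology) (σ : ℕ → MF) :
    P.subst σ ∈ Λ :=
  hΛ.usubst P σ (hΛ.taut P hP)

theorem mem_of_isTautology_imp {P Q : MF} (h : (P.imp Q).isTautology) (σ : ℕ → MF)
    (hP : P.subst σ ∈ Λ) : Q.subst σ ∈ Λ :=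
  hΛ.mp _ _ (hΛ.subst_mem_of_isTautology h σ) hP

theorem mem_of_isTautology_imp₂ {P₁ P₂ Q : MF} (h : (P₁.imp (P₂.imp Q)).isTautology)
    (σ : ℕ → MF) (h₁ : P₁.subst σ ∈ Λ) (h₂ : P₂.subst σ ∈ Λ) : Q.subst σ ∈ Λ :=
  hΛ.mp _ _ (hΛ.mem_of_isTautology_imp h σ h₁) h₂

theorem iff_refl (φ : MF) : φ.iff φ ∈ Λ :=
  hΛ.subst_mem_of_isTautology (P := (var 0).iff (var 0))
    ⟨by simp [isProp, iff, imp], fun v => by simp [propEval_iff]⟩ fun _ => φ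

theorem iff_symm {φ ψ : MF} (h : φ.iff ψ ∈ Λ) : ψ.iff φ ∈ Λ :=
  hΛ.mem_of_isTautology_imp (P := (var 0).iff (var 1)) (Q := (var 1).iff (var 0))
    ⟨by simp [isProp, iff, imp], fun v => by
      simp only [iff, imp, propEval]; cases v 0 <;> cases v 1 <;> rfl⟩
    (fun n => if n = 0 then φ else ψ) h

theorem iff_trans {φ ψ χ : MF} (h₁ : φ.iff ψ ∈ Λ) (h₂ : ψ.iff χ ∈ Λ) : φ.iff χ ∈ Λ :=
  hΛ.mem_of_isTautology_imp₂ (P₁ := (var 0).iff (var 1)) (P₂ := (var 1).iff (var 2))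
    (Q := (var 0).iff (var 2))
    ⟨by simp [isProp, iff, imp], fun v => by
      simp only [iff, imp, propEval]; cases v 0 <;> cases v 1 <;> cases v 2 <;> rfl⟩
    (fun n => if n = 0 then φ else if n = 1 then ψ else χ) h₁ h₂

theorem iff_of_mem {φ ψ : MF} (h₁ : φ ∈ Λ) (h₂ : ψ ∈ Λ) : φ.iff ψ ∈ Λ :=
  hΛ.mem_of_isTautology_imp₂ (P₁ := var 0) (P₂ := var 1) (Q := (var 0).iff (var 1))
    ⟨by simp [isProp, iff, imp], fun v => by
      simp only [iff, imp, propEval]; cases v 0 <;> cases v 1 <;> rfl⟩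
    (fun n => if n = 0 then φ else ψ) h₁ h₂

theorem iff_of_neg_mem {φ ψ : MF} (h₁ : φ.neg ∈ Λ) (h₂ : ψ.neg ∈ Λ) : φ.iff ψ ∈ Λ :=
  hΛ.mem_of_isTautology_imp₂ (P₁ := (var 0).neg) (P₂ := (var 1).neg)
    (Q := (var 0).iff (var 1))
    ⟨by simp [isProp, iff, imp], fun v => by
      simp only [iff, imp, propEval]; cases v 0 <;> cases v 1 <;> rfl⟩
    (fun n => if n = 0 then φ else ψ) h₁ h₂

theorem imp_of_iff {φ ψ : MF} (h : φ.iff ψ ∈ Λ) : φ.imp ψ ∈ Λ :=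
  hΛ.mem_of_isTautology_imp (P := (var 0).iff (var 1)) (Q := (var 0).imp (var 1))
    ⟨by simp [isProp, iff, imp], fun v => by
      simp only [iff, imp, propEval]; cases v 0 <;> cases v 1 <;> rfl⟩
    (fun n => if n = 0 then φ else ψ) h

theorem neg_congr {φ ψ : MF} (h : φ.iff ψ ∈ Λ) : φ.neg.iff ψ.neg ∈ Λ :=
  hΛ.mem_of_isTautology_imp (P := (var 0).iff (var 1)) (Q := (var 0).neg.iff (var 1).neg)
    ⟨by simp [isProp, iff, imp], fun v => by
      simp only [iff, imp, propEval]; cases v 0 <;> cases v 1 <;> rfl⟩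
    (fun n => if n = 0 then φ else ψ) h

theorem and_congr {φ φ' ψ ψ' : MF} (h₁ : φ.iff φ' ∈ Λ) (h₂ : ψ.iff ψ' ∈ Λ) :
    (φ.and ψ).iff (φ'.and ψ') ∈ Λ :=
  hΛ.mem_of_isTautology_imp₂ (P₁ := (var 0).iff (var 1)) (P₂ := (var 2).iff (var 3))
    (Q := ((var 0).and (var 2)).iff ((var 1).and (var 3)))
    ⟨by simp [isProp, iff, imp], fun v => by
      simp only [iff, imp, propEval]
      cases v 0 <;> cases v 1 <;> cases v 2 <;> cases v 3 <;> rfl⟩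
    (fun n => if n = 0 then φ else if n = 1 then φ' else if n = 2 then ψ else ψ') h₁ h₂

theorem or_congr {φ φ' ψ ψ' : MF} (h₁ : φ.iff φ' ∈ Λ) (h₂ : ψ.iff ψ' ∈ Λ) :
    (φ.or ψ).iff (φ'.or ψ') ∈ Λ :=
  hΛ.mem_of_isTautology_imp₂ (P₁ := (var 0).iff (var 1)) (P₂ := (var 2).iff (var 3))
    (Q := ((var 0).or (var 2)).iff ((var 1).or (var 3)))
    ⟨by simp [isProp, iff, imp], fun v => by
      simp only [iff, imp, propEval]
      cases v 0 <;> cases v 1 <;> cases v 2 <;> cases v 3 <;> rfl⟩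
    (fun n => if n = 0 then φ else if n = 1 then φ' else if n = 2 then ψ else ψ') h₁ h₂

theorem box_imp_box {φ ψ : MF} (h : φ.imp ψ ∈ Λ) : φ.box.imp ψ.box ∈ Λ :=
  hΛ.mp _ _ (hΛ.axK φ ψ) (hΛ.nec _ h)

theorem box_congr {φ ψ : MF} (h : φ.iff ψ ∈ Λ) : φ.box.iff ψ.box ∈ Λ :=
  hΛ.mem_of_isTautology_imp₂ (P₁ := var 0) (P₂ := var 1) (Q := (var 0).and (var 1))
    ⟨by simp [isProp, imp], fun v => by
      simp only [imp, propEval]; cases v 0 <;> cases v 1 <;> rfl⟩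
    (fun n => if n = 0 then φ.box.imp ψ.box else ψ.box.imp φ.box)
    (hΛ.box_imp_box (hΛ.imp_of_iff h)) (hΛ.box_imp_box (hΛ.imp_of_iff (hΛ.iff_symm h)))

theorem dia_congr {φ ψ : MF} (h : φ.iff ψ ∈ Λ) : φ.dia.iff ψ.dia ∈ Λ :=
  hΛ.iff_trans (hΛ.dual φ) <| hΛ.iff_trans (hΛ.neg_congr (hΛ.box_congr (hΛ.neg_congr h))) <|
    hΛ.iff_symm (hΛ.dual ψ)

theorem subst_congr (φ : MF) {σ τ : ℕ → MF} (h : ∀ n, (σ n).iff (τ n) ∈ Λ) :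
    (φ.subst σ).iff (φ.subst τ) ∈ Λ := by
  induction φ with
  | var n => exact h n
  | neg φ ih => exact hΛ.neg_congr ih
  | and φ ψ ih₁ ih₂ => exact hΛ.and_congr ih₁ ih₂
  | or φ ψ ih₁ ih₂ => exact hΛ.or_congr ih₁ ih₂
  | dia φ ih => exact hΛ.dia_congr ih
  | box φ ih => exact hΛ.box_congr ih

theorem boxIter_mem {n : ℕ} (h : boxIter n bot ∈ Λ) (φ : MF) : boxIter n φ ∈ Λ := by
  suffices ∀ k, (boxIter k bot).imp (boxIter k φ) ∈ Λ from hΛ.mp _ _ (this n) h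
  intro k
  induction k with
  | zero =>
    exact hΛ.subst_mem_of_isTautology (P := bot.imp (var 1))
      ⟨by simp [isProp, bot, imp], fun v => by
        simp only [bot, imp, propEval]; cases v 0 <;> cases v 1 <;> rfl⟩
      (fun n => if n = 0 then var 0 else φ)
  | succ k ih => exact hΛ.box_imp_box ih

theorem neg_diaIter_mem {n : ℕ} (h : boxIter n bot ∈ Λ) (φ : MF) : (diaIter n φ).neg ∈ Λ := by
  suffices ∀ k, (boxIter k φ.neg).imp (diaIter k φ).neg ∈ Λ from
    hΛ.mp _ _ (this n) (hΛ.boxIter_mem h _)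
  intro k
  induction k with
  | zero => exact hΛ.imp_of_iff (hΛ.iff_refl _)
  | succ k ih =>
    have hdual : (diaIter k φ).neg.box.imp (diaIter (k + 1) φ).neg ∈ Λ :=
      hΛ.mem_of_isTautology_imp (P := (var 0).iff (var 1).neg) (Q := (var 1).imp (var 0).neg)
        ⟨by simp [isProp, iff, imp], fun v => by
          simp only [iff, imp, propEval]; cases v 0 <;> cases v 1 <;> rfl⟩
        (fun n => if n = 0 then diaIter (k + 1) φ else (diaIter k φ).neg.box) (hΛ.dual _)
    exact hΛ.mem_of_isTautology_imp₂ (P₁ := (var 0).imp (var 1)) (P₂ := (var 1).imp (var 2))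
      (Q := (var 0).imp (var 2))
      ⟨by simp [isProp, imp], fun v => by
        simp only [imp, propEval]; cases v 0 <;> cases v 1 <;> cases v 2 <;> rfl⟩
      (fun n => if n = 0 then boxIter (k + 1) φ.neg else if n = 1 then (diaIter k φ).neg.box
        else (diaIter (k + 1) φ).neg) (hΛ.box_imp_box ih) hdual

end NormalLogic

def ExpressibleIn (Λ Ψ : Set MF) (φ : MF) : Prop :=
  ∀ τ : ℕ → MF, (∀ n, MLFrag Ψ (τ n)) → ∃ ψ, MLFrag Ψ ψ ∧ (φ.subst τ).iff ψ ∈ Λ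

section Expressible

variable {Λ : Set MF} (hΛ : NormalLogic Λ) {Φ Ψ : Set MF}
include hΛ

theorem expressibleIn_of_mem {φ : MF} (h : φ ∈ Ψ) : ExpressibleIn Λ Ψ φ :=
  fun τ hτ => ⟨φ.subst τ, .app φ h τ hτ, hΛ.iff_refl _⟩

theorem MLFrag.expressibleIn (hΦ : ∀ θ ∈ Φ, ExpressibleIn Λ Ψ θ) {φ : MF} (hφ : MLFrag Φ φ) :
    ExpressibleIn Λ Ψ φ := by
  induction hφ with
  | var n => exact fun τ hτ => ⟨τ n, hτ n, hΛ.iff_refl _⟩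
  | app θ hθ σ _ ih =>
    intro τ hτ
    choose ψ hψ hσψ using fun n => ih n τ hτ
    obtain ⟨χ, hχ, hθχ⟩ := hΦ θ hθ ψ hψ
    rw [MF.subst_subst]
    exact ⟨χ, hχ, hΛ.iff_trans (hΛ.subst_congr θ hσψ) hθχ⟩

theorem exprLe_of_expressibleIn (h : ∀ φ ∈ Φ, ExpressibleIn Λ Ψ φ) : exprLe Λ Φ Ψ := by
  intro φ hφ
  simpa using hφ.expressibleIn hΛ h MF.var MLFrag.var

end Expressible

/-- Types A and B at once: `r` says whether the world of the one-point frame is reflexive. -/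
def PointType (Λ : Set MF) (r : Bool) : Prop :=
  (∀ φ ∈ Λ, ∀ V : ℕ → Prop, MF.sat (W := Unit) (fun _ _ => r = true) (fun n _ => V n) φ ()) ∧
    (r = false → ∃ n, MF.boxIter n MF.bot ∈ Λ)

theorem exists_pointType {Λ : Set MF} (h : TypeA Λ ∨ TypeB Λ) : ∃ r, PointType Λ r := by
  rcases h with hA | ⟨hB, n, -, hn⟩
  · exact ⟨true, fun φ hφ V => by simpa using hA φ hφ V, by simp⟩
  · exact ⟨false, fun φ hφ V => by simpa using hB φ hφ V, fun _ => ⟨n, hn⟩⟩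

namespace MF

def erase (r : Bool) : MF → MF
  | var n => var n
  | neg φ => (φ.erase r).neg
  | and φ ψ => (φ.erase r).and (ψ.erase r)
  | or φ ψ => (φ.erase r).or (ψ.erase r)
  | dia φ => if r then φ.erase r else bot
  | box φ => if r then φ.erase r else top

theorem erase_iff (r : Bool) (φ ψ : MF) : (φ.iff ψ).erase r = (φ.erase r).iff (ψ.erase r) :=
  rfl

theorem isProp_erase (r : Bool) (φ : MF) : (φ.erase r).isProp := by
  induction φ <;> cases r <;> simp_all [erase, isProp, bot, top]

theorem erase_subst {θ : MF} (hθ : θ.isProp) (r : Bool) (σ : ℕ → MF) :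
    (θ.subst σ).erase r = θ.subst fun n => (σ n).erase r := by
  induction θ <;> simp_all [erase, subst, isProp]

theorem erase_eq_self {θ : MF} (hθ : θ.isProp) (r : Bool) : θ.erase r = θ := by
  simpa [erase] using erase_subst hθ r var

theorem sat_point_iff (r : Bool) (v : ℕ → Bool) (φ : MF) :
    φ.sat (W := Unit) (fun _ _ => r = true) (fun n _ => v n = true) () ↔
      (φ.erase r).propEval v = true := by
  induction φ <;> cases r <;> simp_all [sat, erase, propEval, bot, top]

end MF

theorem MLFrag.erase {Ψ : Set MF} (hΨ : IsSimpleSet Ψ) (r : Bool) {ψ : MF} (hψ : MLFrag Ψ ψ) :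
    MLFrag (MF.erase r '' Ψ) (ψ.erase r) := by
  induction hψ with
  | var n => exact .var n
  | app θ hθ σ _ ih =>
    have hθ' : MLFrag (MF.erase r '' Ψ) (θ.erase r) := .of_mem (Set.mem_image_of_mem _ hθ)
    rcases hΨ θ hθ with ⟨m, rfl⟩ | ⟨m, rfl⟩ | hp
    · cases r
      · exact hθ'
      · exact ih m
    · cases r
      · exact hθ'
      · exact ih m
    · rw [MF.erase_subst hp]
      exact .app θ (show θ ∈ MF.erase r '' Ψ from ⟨θ, hθ, MF.erase_eq_self hp r⟩) _ ih

def PropDefinable (Φ Θ : Set MF) : Prop :=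
  ∀ α ∈ Φ, α.isProp → ∃ t, MLFrag Θ t ∧ (α.iff t).isTautology

section Characterization

variable {Λ : Set MF} {r : Bool} {Φ Ψ : Set MF}

theorem propDefinable_of_exprLe (hr : PointType Λ r) (hΨ : IsSimpleSet Ψ) (h : exprLe Λ Φ Ψ) :
    PropDefinable Φ (MF.erase r '' Ψ) := by
  intro α hα hp
  obtain ⟨ψ, hψ, hαψ⟩ := h α (.of_mem hα)
  refine ⟨ψ.erase r, hψ.erase hΨ r,
    MF.isTautology_iff_of_propEval_eq hp (MF.isProp_erase r ψ) fun v => ?_⟩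
  have := (MF.sat_point_iff r v _).1 (hr.1 _ hαψ fun n => v n = true)
  rwa [MF.erase_iff, MF.erase_eq_self hp, MF.propEval_iff] at this

variable (hΛ : NormalLogic Λ) (hr : PointType Λ r)
include hΛ hr

theorem expressibleIn_erase (hΨ : IsSimpleSet Ψ) {θ : MF} (hθ : θ ∈ Ψ) :
    ExpressibleIn Λ Ψ (θ.erase r) := by
  rcases hΨ θ hθ with ⟨m, rfl⟩ | ⟨m, rfl⟩ | hp
  · cases r
    · obtain ⟨n, hn⟩ := hr.2 rfl
      refine fun τ _ => ⟨MF.diaIter n (.var 0), MLFrag.diaIter hθ (.var 0) n,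
        hΛ.iff_of_neg_mem (hΛ.subst_mem_of_isTautology (P := MF.bot.neg) ?_ τ)
          (hΛ.neg_diaIter_mem hn _)⟩
      exact ⟨by simp [MF.isProp, MF.bot], fun v => by
        simp only [MF.bot, MF.propEval]; cases v 0 <;> rfl⟩
    · exact fun τ hτ => ⟨τ m, hτ m, hΛ.iff_refl _⟩
  · cases r
    · obtain ⟨n, hn⟩ := hr.2 rfl
      refine fun τ _ => ⟨MF.boxIter n (.var 0), MLFrag.boxIter hθ (.var 0) n,
        hΛ.iff_of_mem (hΛ.subst_mem_of_isTautology (P := MF.top) ?_ τ) (hΛ.boxIter_mem hn _)⟩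
      exact ⟨by simp [MF.isProp, MF.top], fun v => by
        simp only [MF.top, MF.propEval]; cases v 0 <;> rfl⟩
    · exact fun τ hτ => ⟨τ m, hτ m, hΛ.iff_refl _⟩
  · rw [MF.erase_eq_self hp r]
    exact expressibleIn_of_mem hΛ hθ

theorem exprLe_of_propDefinable {hd hb : Bool} (hΦ : IsMSimpleSet hd hb Φ)
    (hΨ : IsMSimpleSet hd hb Ψ) (h : PropDefinable Φ (MF.erase r '' Ψ)) : exprLe Λ Φ Ψ := by
  refine exprLe_of_expressibleIn hΛ fun φ hφ => ?_
  rcases hΦ.1 φ hφ with ⟨m, rfl⟩ | ⟨m, rfl⟩ | hp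
  · obtain ⟨m', hm'⟩ := hΨ.2.1.2 (hΦ.2.1.1 ⟨m, hφ⟩)
    exact fun τ hτ => ⟨(τ m).dia, .app _ hm' (fun _ => τ m) fun _ => hτ m, hΛ.iff_refl _⟩
  · obtain ⟨m', hm'⟩ := hΨ.2.2.2 (hΦ.2.2.1 ⟨m, hφ⟩)
    exact fun τ hτ => ⟨(τ m).box, .app _ hm' (fun _ => τ m) fun _ => hτ m, hΛ.iff_refl _⟩
  · obtain ⟨t, ht, hφt⟩ := h φ hφ hp
    have hΘ : ∀ θ ∈ MF.erase r '' Ψ, ExpressibleIn Λ Ψ θ := by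
      rintro _ ⟨θ, hθ, rfl⟩
      exact expressibleIn_erase hΛ hr hΨ.1 hθ
    intro τ hτ
    obtain ⟨ψ, hψ, htψ⟩ := ht.expressibleIn hΛ hΘ τ hτ
    exact ⟨ψ, hψ, hΛ.iff_trans (hΛ.subst_mem_of_isTautology hφt τ) htψ⟩

theorem exprLe_iff_propDefinable {hd hb : Bool} (hΦ : IsMSimpleSet hd hb Φ)
    (hΨ : IsMSimpleSet hd hb Ψ) : exprLe Λ Φ Ψ ↔ PropDefinable Φ (MF.erase r '' Ψ) :=
  ⟨propDefinable_of_exprLe hr hΨ.1, exprLe_of_propDefinable hΛ hr hΦ hΨ⟩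

end Characterization

def tuples {β : Type*} (S : List β) : ℕ → List (List β)
  | 0 => [[]]
  | w + 1 => (tuples S w).flatMap fun l => S.map (· :: l)

theorem mem_tuples {β : Type*} {S : List β} {w : ℕ} {l : List β} :
    l ∈ tuples S w ↔ l.length = w ∧ ∀ x ∈ l, x ∈ S := by
  induction w generalizing l with
  | zero => simp +contextual [tuples, List.length_eq_zero_iff]
  | succ w ih =>
    cases l with
    | nil => simp [tuples]
    | cons x l => simp [tuples, ih, and_comm, and_left_comm]

theorem length_tuples {β : Type*} (S : List β) (w : ℕ) :
    (tuples S w).length = S.length ^ w := by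
  induction w with
  | zero => rfl
  | succ w ih => simp [tuples, List.length_flatMap, ih, pow_succ]

namespace MF

def width : MF → ℕ
  | var n => n + 1
  | neg φ | dia φ | box φ => φ.width
  | and φ ψ | or φ ψ => max φ.width ψ.width

theorem lt_width {φ : MF} {k : ℕ} (h : k ∈ φ.vars) : k < φ.width := by
  induction φ with
  | var n => simp_all [vars, width]
  | neg φ ih | dia φ ih | box φ ih => exact ih h
  | and φ ψ ih₁ ih₂ | or φ ψ ih₁ ih₂ =>
    rcases h with h | h
    · exact (ih₁ h).trans_le (le_max_left _ _)
    · exact (ih₂ h).trans_le (le_max_right _ _)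

theorem width_pos (φ : MF) : 0 < φ.width := by
  induction φ <;> simp_all [width]

/-- Variables `k ≥ n` are read as `false`. -/
def table (n : ℕ) (φ : MF) : List Bool :=
  (tuples [false, true] n).map fun a => φ.propEval (a.getD · false)

theorem length_table (n : ℕ) (φ : MF) : (φ.table n).length = 2 ^ n := by
  simp [table, length_tuples]

theorem propEval_eq_of_table_eq {n : ℕ} {φ ψ : MF} (hφ : ∀ k ∈ φ.vars, k < n)
    (hψ : ∀ k ∈ ψ.vars, k < n) (h : φ.table n = ψ.table n) (v : ℕ → Bool) :
    φ.propEval v = ψ.propEval v := by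
  have ha : (List.range n).map v ∈ tuples [false, true] n := by
    simp [mem_tuples]
  have hv : ∀ k < n, ((List.range n).map v).getD k false = v k := by
    intro k hk; simp [List.getD_eq_getElem?_getD, hk]
  have := List.map_inj_left.1 h _ ha
  rwa [propEval_congr (fun k hk => hv k (hφ k hk)),
    propEval_congr (w := v) (fun k hk => hv k (hψ k hk))] at this

end MF

def applyTable (n : ℕ) (θ : MF) (gs : List (List Bool)) : List Bool :=
  (List.range (2 ^ n)).map fun j => θ.propEval ((gs.map (·.getD j false)).getD · false)

theorem applyTable_table (n : ℕ) (θ : MF) (σ : ℕ → MF) :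
    applyTable n θ ((List.range θ.width).map fun k => (σ k).table n) = (θ.subst σ).table n := by
  refine List.ext_getElem (by simp [applyTable, MF.length_table]) fun j hj _ => ?_
  simp only [applyTable, List.length_map, List.length_range] at hj
  simp only [applyTable, MF.table, List.getElem_map, List.getElem_range, MF.propEval_subst]
  refine MF.propEval_congr fun k hk => ?_
  have hk := MF.lt_width hk
  have hj' : j < (tuples [false, true] n).length := by simpa [length_tuples] using hj
  simp [List.getD_eq_getElem?_getD, hk, hj']

section Iterate

variable {β : Type*} {step : List β → List β}

theorem iterate_subset_iterate (h : ∀ S, S ⊆ step S) (S : List β) {i j : ℕ} (hij : i ≤ j) :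
    step^[i] S ⊆ step^[j] S := by
  induction hij with
  | refl => exact List.Subset.refl _
  | step _ ih => rw [Function.iterate_succ_apply']; exact List.Subset.trans ih (h _)

theorem iterate_add_subset_of_iterate_succ_subset (hmono : ∀ S T, S ⊆ T → step S ⊆ step T)
    {S : List β} {i : ℕ} (hi : step^[i + 1] S ⊆ step^[i] S) (j : ℕ) :
    step^[i + j] S ⊆ step^[i] S := by
  rw [Function.iterate_succ_apply'] at hi
  induction j with
  | zero => exact List.Subset.refl _
  | succ j ih =>
    rw [← add_assoc, Function.iterate_succ_apply']
    exact List.Subset.trans (hmono _ _ ih) hi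

theorem le_card_toFinset_iterate [DecidableEq β] (h : ∀ S, S ⊆ step S) (S : List β) {m : ℕ}
    (hm : ∀ i < m, ¬step^[i + 1] S ⊆ step^[i] S) : m ≤ (step^[m] S).toFinset.card := by
  induction m with
  | zero => simp
  | succ m ih =>
    have hlt : (step^[m] S).toFinset ⊂ (step^[m + 1] S).toFinset := by
      rw [Function.iterate_succ_apply']
      refine Finset.ssubset_iff_subset_ne.2 ⟨fun y hy => ?_, fun he => hm m (by omega) ?_⟩
      · simpa using h _ (List.mem_toFinset.1 hy)
      · intro y hy
        rw [Function.iterate_succ_apply'] at hy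
        rw [← List.mem_toFinset, he]
        exact List.mem_toFinset.2 hy
    have := Finset.card_lt_card hlt
    have := ih fun i hi => hm i (by omega)
    omega

theorem mem_iterate_card_of_mem_iterate (U : Finset β) (h : ∀ S, S ⊆ step S)
    (hmono : ∀ S T, S ⊆ T → step S ⊆ step T) {S : List β} (hU : ∀ k, ∀ x ∈ step^[k] S, x ∈ U)
    {k : ℕ} {x : β} (hx : x ∈ step^[k] S) : x ∈ step^[U.card] S := by
  classical
  obtain ⟨i, hi, hstable⟩ : ∃ i ≤ U.card, step^[i + 1] S ⊆ step^[i] S := by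
    by_contra! hne
    have h₁ := le_card_toFinset_iterate h S (m := U.card + 1) fun i hi => hne i (by omega)
    have h₂ : (step^[U.card + 1] S).toFinset.card ≤ U.card :=
      Finset.card_le_card fun y hy => hU _ y (List.mem_toFinset.1 hy)
    omega
  rcases le_total k U.card with hk | hk
  · exact iterate_subset_iterate h S hk hx
  · obtain ⟨j, rfl⟩ : ∃ j, k = i + j := ⟨k - i, by omega⟩
    exact iterate_subset_iterate h S hi
      (iterate_add_subset_of_iterate_succ_subset hmono hstable j hx)

end Iterate

def closureStep (n : ℕ) (Θ : List MF) (S : List (List Bool)) : List (List Bool) :=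
  S ++ Θ.flatMap fun θ => (tuples S θ.width).map (applyTable n θ)

/-- `2 ^ 2 ^ n` rounds suffice since there are that many tables of length `2 ^ n`. -/
def tableClosure (n : ℕ) (Θ : List MF) : List (List Bool) :=
  (closureStep n Θ)^[2 ^ 2 ^ n] ((List.range n).map fun i => (MF.var i).table n)

section TableClosure

variable {n : ℕ} {Θ : List MF}

theorem mem_closureStep {S : List (List Bool)} {x : List Bool} :
    x ∈ closureStep n Θ S ↔ x ∈ S ∨ ∃ θ ∈ Θ, ∃ gs, (gs.length = θ.width ∧ ∀ g ∈ gs, g ∈ S) ∧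
      applyTable n θ gs = x := by
  simp [closureStep, mem_tuples]

theorem subset_closureStep (S : List (List Bool)) : S ⊆ closureStep n Θ S :=
  List.subset_append_left _ _

theorem closureStep_mono {S T : List (List Bool)} (h : S ⊆ T) :
    closureStep n Θ S ⊆ closureStep n Θ T := by
  intro x hx
  rcases mem_closureStep.1 hx with hx | ⟨θ, hθ, gs, ⟨hlen, hgs⟩, rfl⟩
  · exact mem_closureStep.2 (.inl (h hx))
  · exact mem_closureStep.2 (.inr ⟨θ, hθ, gs, ⟨hlen, fun g hg => h (hgs g hg)⟩, rfl⟩)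

theorem length_of_mem_iterate {k : ℕ} {x : List Bool}
    (hx : x ∈ (closureStep n Θ)^[k] ((List.range n).map fun i => (MF.var i).table n)) :
    x.length = 2 ^ n := by
  induction k generalizing x with
  | zero =>
    obtain ⟨i, -, rfl⟩ := List.mem_map.1 hx
    exact MF.length_table n _
  | succ k ih =>
    rw [Function.iterate_succ_apply'] at hx
    rcases mem_closureStep.1 hx with hx | ⟨θ, -, gs, -, rfl⟩
    · exact ih hx
    · simp [applyTable]

theorem mem_tableClosure_of_mem_iterate {k : ℕ} {x : List Bool}
    (hx : x ∈ (closureStep n Θ)^[k] ((List.range n).map fun i => (MF.var i).table n)) :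
    x ∈ tableClosure n Θ := by
  let U := (tuples [false, true] (2 ^ n)).toFinset
  have hU : U.card ≤ 2 ^ 2 ^ n := by
    simpa [length_tuples] using List.toFinset_card_le (tuples [false, true] (2 ^ n))
  refine iterate_subset_iterate subset_closureStep _ hU <|
    mem_iterate_card_of_mem_iterate U subset_closureStep (fun _ _ => closureStep_mono)
      (fun k y hy => ?_) hx
  simp [U, mem_tuples, length_of_mem_iterate hy]

theorem exists_table_eq_of_mem_iterate {k : ℕ} {x : List Bool}
    (hx : x ∈ (closureStep n Θ)^[k] ((List.range n).map fun i => (MF.var i).table n)) :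
    ∃ t, MLFrag {θ | θ ∈ Θ} t ∧ (∀ j ∈ t.vars, j < n) ∧ t.table n = x := by
  induction k generalizing x with
  | zero =>
    obtain ⟨i, hi, rfl⟩ := List.mem_map.1 hx
    exact ⟨.var i, .var i, by simpa [MF.vars] using hi, rfl⟩
  | succ k ih =>
    rw [Function.iterate_succ_apply'] at hx
    rcases mem_closureStep.1 hx with hx | ⟨θ, hθ, gs, ⟨hlen, hgs⟩, rfl⟩
    · exact ih hx
    have key : ∀ i, ∃ t, MLFrag {θ | θ ∈ Θ} t ∧
        (i < θ.width → (∀ j ∈ t.vars, j < n) ∧ t.table n = gs.getD i []) := by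
      intro i
      by_cases hi : i < θ.width
      · obtain ⟨t, ht, htv, hteq⟩ := ih (hgs (gs.getD i []) (by
          rw [List.getD_eq_getElem _ _ (by omega)]; exact List.getElem_mem _))
        exact ⟨t, ht, fun _ => ⟨htv, hteq⟩⟩
      · exact ⟨.var 0, .var 0, fun h => absurd h hi⟩
    choose σ hσ hσ' using key
    have hgs' : gs = (List.range θ.width).map fun i => (σ i).table n := by
      refine List.ext_getElem (by simp [hlen]) fun i hi _ => ?_
      simp [(hσ' i (hlen ▸ hi)).2, hi]
    refine ⟨θ.subst σ, .app θ hθ σ hσ, fun j hj => ?_, by rw [hgs', applyTable_table]⟩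
    obtain ⟨i, hi, hj⟩ := MF.exists_mem_vars_of_mem_vars_subst hj
    exact (hσ' i (MF.lt_width hi)).1 j hj

theorem table_subst_mem_tableClosure (hn : 0 < n) {t : MF} (ht : MLFrag {θ | θ ∈ Θ} t) :
    (t.subst fun k => .var (if k < n then k else 0)).table n ∈ tableClosure n Θ := by
  induction ht with
  | var j =>
    refine mem_tableClosure_of_mem_iterate (k := 0) (List.mem_map.2 ⟨_, ?_, rfl⟩)
    split_ifs with hj <;> simpa
  | app θ hθ σ _ ih =>
    rw [MF.subst_subst, ← applyTable_table]
    refine mem_tableClosure_of_mem_iterate (k := 2 ^ 2 ^ n + 1) ?_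
    rw [Function.iterate_succ_apply']
    refine mem_closureStep.2 (.inr ⟨θ, hθ, _, ⟨by simp, fun g hg => ?_⟩, rfl⟩)
    obtain ⟨i, -, rfl⟩ := List.mem_map.1 hg
    exact ih i

theorem table_mem_tableClosure_iff (hΘ : ∀ θ ∈ Θ, θ.isProp) {α : MF} (hα : α.isProp) :
    α.table α.width ∈ tableClosure α.width Θ ↔
      ∃ t, MLFrag {θ | θ ∈ Θ} t ∧ (α.iff t).isTautology := by
  constructor
  · intro h
    obtain ⟨t, ht, htv, hαt⟩ := exists_table_eq_of_mem_iterate h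
    exact ⟨t, ht, MF.isTautology_iff_of_propEval_eq hα (ht.isProp hΘ)
      (MF.propEval_eq_of_table_eq (fun _ => MF.lt_width) htv hαt.symm)⟩
  · rintro ⟨t, ht, -, hαt⟩
    convert table_subst_mem_tableClosure (MF.width_pos α) ht using 1
    refine List.map_congr_left fun a _ => ?_
    rw [MF.propEval_subst, ← (MF.propEval_iff _ α t).1 (hαt _)]
    exact MF.propEval_congr fun k hk => by simp [MF.lt_width hk, MF.propEval]

end TableClosure

def PropDefinableCheck (Φ Θ : List MF) : Prop :=
  ∀ α ∈ Φ, α.isProp → α.table α.width ∈ tableClosure α.width Θ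

theorem propDefinableCheck_iff {Φ Θ : List MF} (hΘ : ∀ θ ∈ Θ, θ.isProp) :
    PropDefinableCheck Φ Θ ↔ PropDefinable {α | α ∈ Φ} {θ | θ ∈ Θ} :=
  forall₂_congr fun _ _ => forall_congr' fun hα => table_mem_tableClosure_iff hΘ hα

namespace MF

def fold {σ : Type*} (var : ℕ → σ) (neg : σ → σ) (and or : σ → σ → σ) (dia box : σ → σ) :
    MF → σ
  | .var n => var n
  | .neg φ => neg (φ.fold var neg and or dia box)
  | .and φ ψ => and (φ.fold var neg and or dia box) (ψ.fold var neg and or dia box)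
  | .or φ ψ => or (φ.fold var neg and or dia box) (ψ.fold var neg and or dia box)
  | .dia φ => dia (φ.fold var neg and or dia box)
  | .box φ => box (φ.fold var neg and or dia box)

def ofCode (c : ℕ) : MF :=
  match _h : c.unpair.1 with
  | 0 => var c.unpair.2
  | 1 => neg (ofCode c.unpair.2)
  | 2 => and (ofCode c.unpair.2.unpair.1) (ofCode c.unpair.2.unpair.2)
  | 3 => or (ofCode c.unpair.2.unpair.1) (ofCode c.unpair.2.unpair.2)
  | 4 => dia (ofCode c.unpair.2)
  | 5 => box (ofCode c.unpair.2)
  | _ + 6 => var 0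
decreasing_by
  all_goals
    have := Nat.unpair_add_le c
    have := Nat.unpair_left_le c.unpair.2
    have := Nat.unpair_right_le c.unpair.2
    omega

theorem ofCode_encodeMF (φ : MF) : ofCode φ.encodeMF = φ := by
  induction φ <;> rw [ofCode] <;> split <;> simp_all [encodeMF]

theorem encodeMF_eq_fold (φ : MF) :
    φ.encodeMF = φ.fold (Nat.pair 0) (Nat.pair 1) (fun a b => Nat.pair 2 (Nat.pair a b))
      (fun a b => Nat.pair 3 (Nat.pair a b)) (Nat.pair 4) (Nat.pair 5) := by
  induction φ <;> simp_all [fold, encodeMF]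

theorem width_eq_fold (φ : MF) : φ.width = φ.fold (· + 1) id max max id id := by
  induction φ <;> simp_all [width, fold]

theorem erase_eq_fold (r : Bool) (φ : MF) :
    φ.erase r = φ.fold var neg and or (if r then id else fun _ => bot)
      (if r then id else fun _ => top) := by
  induction φ <;> cases r <;> simp_all [erase, fold]

theorem propEval_eq_fold (v : ℕ → Bool) (φ : MF) :
    φ.propEval v = φ.fold v (!·) (· && ·) (· || ·) id id := by
  induction φ <;> simp_all [propEval, fold]

theorem isProp_iff_fold (φ : MF) :
    φ.isProp ↔ φ.fold (fun _ => true) id (· && ·) (· && ·) (fun _ => false) (fun _ => false) := by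
  induction φ <;> simp_all [fold, isProp]

instance : DecidablePred isProp := fun φ => decidable_of_iff _ (isProp_iff_fold φ).symm

end MF

instance : DecidableRel PropDefinableCheck := fun Φ Θ =>
  inferInstanceAs (Decidable (∀ α ∈ Φ, α.isProp → α.table α.width ∈ tableClosure α.width Θ))

section Computability

open Primrec

variable {α σ : Type*} [Primcodable α] [Primcodable σ]

theorem MF.primrec_fold_ofCode {var : α → ℕ → σ} {neg dia box : α → σ → σ}
    {and or : α → σ → σ → σ} (hvar : Primrec₂ var) (hneg : Primrec₂ neg)
    (hand : Primrec₂ fun a (p : σ × σ) => and a p.1 p.2)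
    (hor : Primrec₂ fun a (p : σ × σ) => or a p.1 p.2) (hdia : Primrec₂ dia)
    (hbox : Primrec₂ box) :
    Primrec₂ fun a c => (MF.ofCode c).fold (var a) (neg a) (and a) (or a) (dia a) (box a) := by
  let g : α → List σ → Option σ := fun a L =>
    let c := L.length
    let x := L[c.unpair.2]?.getD (var a 0)
    let x₁ := L[c.unpair.2.unpair.1]?.getD (var a 0)
    let x₂ := L[c.unpair.2.unpair.2]?.getD (var a 0)
    some (([var a c.unpair.2, neg a x, and a x₁ x₂, or a x₁ x₂, dia a x, box a x][c.unpair.1]?).getD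
      (var a 0))
  refine nat_strong_rec _ (g := g) ?_ fun a c => ?_
  · have c : Primrec fun p : α × List σ => p.2.length.unpair := unpair.comp (list_length.comp snd)
    have p := snd.comp c
    have d : Primrec fun p : α × List σ => var p.1 0 := hvar.comp fst (const 0)
    have x := option_getD.comp (list_getElem?.comp snd p) d
    have x₁ := option_getD.comp (list_getElem?.comp snd (fst.comp (unpair.comp p))) d
    have x₂ := option_getD.comp (list_getElem?.comp snd (snd.comp (unpair.comp p))) d
    refine option_some.comp (option_getD.comp (list_getElem?.comp ?_ (fst.comp c)) d)
    exact list_cons.comp (hvar.comp fst p) <| list_cons.comp (hneg.comp fst x) <|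
      list_cons.comp (hand.comp fst (pair x₁ x₂)) <| list_cons.comp (hor.comp fst (pair x₁ x₂)) <|
      list_cons.comp (hdia.comp fst x) <| list_cons.comp (hbox.comp fst x) (const [])
  · have h₀ : c.unpair.1 ≠ 0 → c.unpair.2 < c := fun h => by
      have := Nat.unpair_add_le c
      omega
    simp only [g, List.length_map, List.length_range]
    rw [MF.ofCode]
    split <;> simp_all [MF.fold, (Nat.unpair_left_le _).trans_lt,
      (Nat.unpair_right_le _).trans_lt]

theorem MF.primrec_encodeMF_ofCode : Primrec fun c => (MF.ofCode c).encodeMF := by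
  have h := primrec_fold_ofCode (α := Unit) (var := fun _ => Nat.pair 0)
    (neg := fun _ => Nat.pair 1) (and := fun _ a b => Nat.pair 2 (Nat.pair a b))
    (or := fun _ a b => Nat.pair 3 (Nat.pair a b)) (dia := fun _ => Nat.pair 4)
    (box := fun _ => Nat.pair 5) (Primrec₂.natPair.comp (const 0) snd)
    (Primrec₂.natPair.comp (const 1) snd)
    (Primrec₂.natPair.comp (const 2) (Primrec₂.natPair.comp (fst.comp snd) (snd.comp snd)))
    (Primrec₂.natPair.comp (const 3) (Primrec₂.natPair.comp (fst.comp snd) (snd.comp snd)))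
    (Primrec₂.natPair.comp (const 4) snd) (Primrec₂.natPair.comp (const 5) snd)
  exact (h.comp (const ()) .id).of_eq fun c => (MF.encodeMF_eq_fold _).symm

instance : Primcodable MF where
  encode := MF.encodeMF
  decode c := some (MF.ofCode c)
  encodek φ := congrArg some (MF.ofCode_encodeMF φ)
  prim := Primrec.nat_iff.1 <| succ.comp MF.primrec_encodeMF_ofCode

theorem MF.primrec_fold {var : α → ℕ → σ} {neg dia box : α → σ → σ} {and or : α → σ → σ → σ}
    (hvar : Primrec₂ var) (hneg : Primrec₂ neg)
    (hand : Primrec₂ fun a (p : σ × σ) => and a p.1 p.2)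
    (hor : Primrec₂ fun a (p : σ × σ) => or a p.1 p.2) (hdia : Primrec₂ dia)
    (hbox : Primrec₂ box) :
    Primrec₂ fun a (φ : MF) => φ.fold (var a) (neg a) (and a) (or a) (dia a) (box a) :=
  ((primrec_fold_ofCode hvar hneg hand hor hdia hbox).comp fst (Primrec.encode.comp snd)).of_eq
    fun p => congrArg _ (MF.ofCode_encodeMF p.2)

theorem MF.primrec_var : Primrec MF.var :=
  encode_iff.1 <| Primrec₂.natPair.comp (const 0) .id

theorem MF.primrec_neg : Primrec MF.neg :=
  encode_iff.1 <| Primrec₂.natPair.comp (const 1) Primrec.encode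

theorem MF.primrec_and : Primrec₂ MF.and :=
  encode_iff.1 <| Primrec₂.natPair.comp (const 2) <|
    Primrec₂.natPair.comp (Primrec.encode.comp fst) (Primrec.encode.comp snd)

theorem MF.primrec_or : Primrec₂ MF.or :=
  encode_iff.1 <| Primrec₂.natPair.comp (const 3) <|
    Primrec₂.natPair.comp (Primrec.encode.comp fst) (Primrec.encode.comp snd)

theorem MF.primrec_erase (r : Bool) : Primrec (MF.erase r) := by
  have h := primrec_fold (α := Unit) (var := fun _ => MF.var) (neg := fun _ => MF.neg)
    (and := fun _ => MF.and) (or := fun _ => MF.or)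
    (dia := fun _ => if r then id else fun _ => MF.bot)
    (box := fun _ => if r then id else fun _ => MF.top)
    (MF.primrec_var.comp snd) (MF.primrec_neg.comp snd)
    (MF.primrec_and.comp (fst.comp snd) (snd.comp snd))
    (MF.primrec_or.comp (fst.comp snd) (snd.comp snd))
    (by cases r <;> simp [Primrec₂, snd, const]) (by cases r <;> simp [Primrec₂, snd, const])
  exact (h.comp (const ()) .id).of_eq fun φ => (MF.erase_eq_fold r φ).symm

theorem MF.primrec_width : Primrec MF.width := by
  have h := primrec_fold (α := Unit) (var := fun _ => (· + 1)) (neg := fun _ => id)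
    (and := fun _ => max) (or := fun _ => max) (dia := fun _ => id) (box := fun _ => id)
    (succ.comp snd) snd (nat_max.comp (fst.comp snd) (snd.comp snd))
    (nat_max.comp (fst.comp snd) (snd.comp snd)) snd snd
  exact (h.comp (const ()) .id).of_eq fun φ => (MF.width_eq_fold φ).symm

theorem MF.primrecPred_isProp : PrimrecPred MF.isProp := by
  have h := primrec_fold (α := Unit) (var := fun _ _ => true) (neg := fun _ => id)
    (and := fun _ => (· && ·)) (or := fun _ => (· && ·)) (dia := fun _ _ => false)
    (box := fun _ _ => false) (const true) snd (Primrec.and.comp (fst.comp snd) (snd.comp snd))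
    (Primrec.and.comp (fst.comp snd) (snd.comp snd)) (const false) (const false)
  exact (Primrec.eq.comp (h.comp (const ()) .id) (const true)).of_eq fun φ =>
    (MF.isProp_iff_fold φ).symm

theorem MF.primrec_propEval :
    Primrec₂ fun (a : List Bool) (φ : MF) => φ.propEval (a.getD · false) := by
  have h := primrec_fold (var := fun (a : List Bool) k => a.getD k false) (neg := fun _ b => !b)
    (and := fun _ => (· && ·)) (or := fun _ => (· || ·)) (dia := fun _ => id) (box := fun _ => id)
    (list_getD false) (Primrec.not.comp snd) (Primrec.and.comp (fst.comp snd) (snd.comp snd))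
    (Primrec.or.comp (fst.comp snd) (snd.comp snd)) snd snd
  exact h.of_eq fun a φ => (MF.propEval_eq_fold _ φ).symm

theorem primrec_pow : Primrec₂ ((· ^ ·) : ℕ → ℕ → ℕ) :=
  Primrec₂.unpaired'.1 Nat.Primrec.pow

theorem primrec_tuples {β : Type*} [Primcodable β] : Primrec₂ (tuples (β := β)) := by
  have h := nat_rec (f := fun _ : List β => [[]]) (const _) <| to₂ <|
    list_flatMap (snd.comp snd) (list_map (fst.comp fst) (list_cons.comp snd (snd.comp fst)).to₂).to₂
  refine h.of_eq fun S w => ?_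
  induction w with
  | zero => rfl
  | succ w ih => simp [tuples, ← ih]

theorem MF.primrec_table : Primrec₂ MF.table :=
  list_map (primrec_tuples.comp (const _) fst) (MF.primrec_propEval.comp snd (snd.comp fst))

theorem primrec_applyTable :
    Primrec₂ fun (p : ℕ × MF) (gs : List (List Bool)) => applyTable p.1 p.2 gs :=
  list_map (list_range.comp (primrec_pow.comp (const 2) (fst.comp fst))) <|
    MF.primrec_propEval.comp (list_map (snd.comp fst) ((list_getD false).comp snd (snd.comp fst)))
      (snd.comp (fst.comp fst))

theorem primrec_closureStep :
    Primrec₂ fun (p : ℕ × List MF) (S : List (List Bool)) => closureStep p.1 p.2 S :=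
  list_append.comp snd <| list_flatMap (snd.comp fst) <|
    list_map (primrec_tuples.comp (snd.comp fst) (MF.primrec_width.comp snd))
      (primrec_applyTable.comp (pair (fst.comp (fst.comp (fst.comp fst))) (snd.comp fst)) snd)

theorem primrec_tableClosure : Primrec₂ tableClosure :=
  nat_iterate (primrec_pow.comp (const 2) (primrec_pow.comp (const 2) fst))
    (list_map (list_range.comp fst) (MF.primrec_table.comp (fst.comp fst)
      (MF.primrec_var.comp snd)))
    primrec_closureStep

theorem primrecRel_propDefinableCheck : PrimrecRel PropDefinableCheck := by
  have hmem : PrimrecRel fun (S : List (List Bool)) x => x ∈ S :=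
    (PrimrecRel.exists_mem_list Primrec.eq).of_eq fun S x => by simp
  have h : PrimrecRel fun (α : MF) (Θ : List MF) =>
      α.isProp → α.table α.width ∈ tableClosure α.width Θ :=
    ((MF.primrecPred_isProp.comp fst).not.or <|
      hmem.comp (primrec_tableClosure.comp (MF.primrec_width.comp fst) snd)
        (MF.primrec_table.comp (MF.primrec_width.comp fst) fst)).of_eq
      fun _ => imp_iff_not_or.symm
  exact PrimrecRel.forall_mem_list h

def decodeFormulas (c : ℕ) : List MF := (Encodable.decode c).getD []

theorem decodeFormulas_encode (Φ : List MF) :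
    decodeFormulas (Encodable.encode (Φ.map MF.encodeMF)) = Φ := by
  have : Encodable.encode (Φ.map MF.encodeMF) = Encodable.encode Φ := by
    induction Φ with
    | nil => rfl
    | cons φ Φ ih => simp only [List.map_cons, Encodable.encode_list_cons, ih]; rfl
  simp [decodeFormulas, this]

theorem primrec_decodeFormulas : Primrec decodeFormulas :=
  option_getD.comp Primrec.decode (const [])

end Computability

theorem stmt8 (Λ : Set MF) (hΛ : NormalLogic Λ) (hAB : TypeA Λ ∨ TypeB Λ)
    (hd hb : Bool) :
    ∃ f : ℕ → Bool, Computable f ∧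
      ∀ Φ Ψ : List MF, IsMSimpleSet hd hb {φ | φ ∈ Φ} → IsMSimpleSet hd hb {φ | φ ∈ Ψ} →
        (f (Nat.pair (Encodable.encode (Φ.map MF.encodeMF))
              (Encodable.encode (Ψ.map MF.encodeMF))) = true ↔
          exprLe Λ {φ | φ ∈ Φ} {φ | φ ∈ Ψ}) := by
  obtain ⟨r, hr⟩ := exists_pointType hAB
  refine ⟨fun c => decide (PropDefinableCheck (decodeFormulas c.unpair.1)
    ((decodeFormulas c.unpair.2).map (MF.erase r))), ?_, fun Φ Ψ hΦ hΨ => ?_⟩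
  · open Primrec in
    exact (primrecRel_propDefinableCheck.decide.comp
      (primrec_decodeFormulas.comp (fst.comp unpair))
      (list_map (primrec_decodeFormulas.comp (snd.comp unpair))
        ((MF.primrec_erase r).comp snd).to₂)).to_comp
  · have hΘ : ∀ θ ∈ Ψ.map (MF.erase r), θ.isProp := by simp [MF.isProp_erase]
    have hΘ' : {θ | θ ∈ Ψ.map (MF.erase r)} = MF.erase r '' {φ | φ ∈ Ψ} := by ext; simp
    rw [decide_eq_true_iff, Nat.unpair_pair, decodeFormulas_encode, decodeFormulas_encode,
      propDefinableCheck_iff hΘ, hΘ', exprLe_iff_propDefinable hΛ hr hΦ hΨ]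
end

section
/- Every formula of PL_{¬,⊤} (the propositional fragment whose connectives are negation and the constant ⊤) has a unique characterization with respect to PL_{¬,⊤} consisting of exactly 2 labeled examples. -/
set_option maxHeartbeats 1000000

/-!
Every `PL_{¬,⊤}`-formula is equivalent to a constant or a literal. A constant `b` is pinned
down by labelling both the all-false and the all-true assignment with `b`. A literal over `x`
is pinned down by the all-false assignment and the assignment making only `x` true: a constant
cannot give these two different labels, and a literal of the other polarity or over another
variable mislabels one of them.
-/

def IsConstOrLiteral (f : (ℕ → Bool) → Bool) : Prop :=
  (∃ b, f = fun _ => b) ∨ ∃ x b, f = fun v => (v x).xor b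

theorem PLF.isConstOrLiteral_eval (φ : PLF {bfNot, bfTop}) :
    IsConstOrLiteral fun v => φ.eval v := by
  induction φ with
  | var x => exact Or.inr ⟨x, false, by simp [PLF.eval]⟩
  | app f hf args ih =>
    rcases hf with rfl | rfl
    · rcases ih ⟨0, bfNot.arity_pos⟩ with ⟨b, hb⟩ | ⟨x, b, hb⟩
      · refine Or.inl ⟨!b, funext fun v => ?_⟩
        show (!(args ⟨0, _⟩).eval v) = _
        rw [congrFun hb v]
      · refine Or.inr ⟨x, !b, funext fun v => ?_⟩
        show (!(args ⟨0, _⟩).eval v) = _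
        rw [congrFun hb v, Bool.xor_not]
    · exact Or.inl ⟨true, rfl⟩

theorem IsConstOrLiteral.exists_determining_assignment {f : (ℕ → Bool) → Bool}
    (hf : IsConstOrLiteral f) :
    ∃ w : ℕ → Bool, w ≠ (fun _ => false) ∧ ∀ g, IsConstOrLiteral g →
      g (fun _ => false) = f (fun _ => false) → g w = f w → g = f := by
  rcases hf with ⟨b, rfl⟩ | ⟨x, b, rfl⟩
  · refine ⟨fun _ => true, fun h => by simpa using congrFun h 0, ?_⟩
    rintro g (⟨c, rfl⟩ | ⟨y, c, rfl⟩) h₀ h₁ <;> simp_all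
  · refine ⟨fun n => decide (n = x), fun h => by simpa using congrFun h x, ?_⟩
    rintro g (⟨c, rfl⟩ | ⟨y, c, rfl⟩) h₀ h₁
    · simp_all
    · obtain rfl : c = b := by simpa using h₀
      obtain rfl : y = x := by cases c <;> simpa using h₁
      rfl

theorem stmt11 (φ : PLF {bfNot, bfTop}) :
    ∃ E : Set ((ℕ → Bool) × Bool), E.ncard = 2 ∧ uniqCharPL φ Set.univ E := by
  obtain ⟨w, hw, hdet⟩ := φ.isConstOrLiteral_eval.exists_determining_assignment
  refine ⟨{(fun _ => false, φ.eval fun _ => false), (w, φ.eval w)},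
    Set.ncard_pair fun h => hw (congrArg Prod.fst h).symm, ?_, ?_⟩
  · rintro e (rfl | rfl) <;> rfl
  · intro ψ _ hψ v
    have h₀ : ψ.fits _ := hψ _ (Or.inl rfl)
    have h₁ : ψ.fits _ := hψ _ (Or.inr rfl)
    exact (congrFun (hdet _ ψ.isConstOrLiteral_eval h₀ h₁) v).symm
end

section
/- For every finite set PROP of propositional variables and every PL_{3XOR}[PROP]-formula φ, every set of labeled examples that uniquely characterizes φ with respect to PL_{3XOR}[PROP] contains at least |PROP| − 1 examples. -/
set_option maxHeartbeats 1000000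

/-! XOR-ing a `3XOR`-formula with an even number of variables, two at a time, gives again a
`3XOR`-formula. If `E` had at most `|PROP| - 2` examples, pigeonhole over the subsets of `PROP`
would yield a nonempty set `S ⊆ PROP` of even size on which every assignment of `E` has parity
zero; then `φ ⊕ ⨁_{i ∈ S} xᵢ` fits `E` without being equivalent to `φ`. -/

open scoped symmDiff

instance Bool.charP_two : CharP Bool 2 :=
  CharTwo.of_one_ne_zero_of_two_eq_zero (by decide) (by decide)

theorem Finset.sum_symmDiff {ι R : Type*} [DecidableEq ι] [BooleanRing R] (s t : Finset ι)
    (f : ι → R) : ∑ i ∈ s ∆ t, f i = ∑ i ∈ s, f i + ∑ i ∈ t, f i := by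
  rw [Finset.symmDiff_def, Finset.sum_union disjoint_sdiff_sdiff,
    ← Finset.sum_inter_add_sum_sdiff s t, ← Finset.sum_inter_add_sum_sdiff t s,
    Finset.inter_comm t s]
  linear_combination (-∑ i ∈ s ∩ t, f i) * BooleanRing.add_self (1 : R)

/-- Two subsets of `F` with the same parities on `A` exist by pigeonhole; take their symmetric
difference. -/
theorem Finset.exists_nonempty_subset_forall_sum_eq_zero {ι : Type*}
    (F : Finset ι) (A : Finset (ι → Bool)) (hA : A.card < F.card) :
    ∃ S ⊆ F, S.Nonempty ∧ ∀ v ∈ A, ∑ i ∈ S, v i = 0 := by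
  classical
  have hcard : (Finset.univ : Finset (A → Bool)).card < F.powerset.card := by
    simpa [Fintype.card_fun] using Nat.pow_lt_pow_right one_lt_two hA
  obtain ⟨T₁, hT₁, T₂, hT₂, hne, heq⟩ :=
    Finset.exists_ne_map_eq_of_card_lt_of_maps_to hcard
      (f := fun T (v : A) => ∑ i ∈ T, v.1 i) (fun _ _ => Finset.mem_univ _)
  refine ⟨T₁ ∆ T₂, Finset.symmDiff_subset_union.trans ?_, Finset.symmDiff_nonempty.2 hne,
    fun v hv => ?_⟩
  · exact Finset.union_subset (Finset.mem_powerset.1 hT₁) (Finset.mem_powerset.1 hT₂)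
  · rw [Finset.sum_symmDiff, congrFun heq ⟨v, hv⟩, BooleanRing.add_self]

namespace PLF

/-- `φ ⊕ x_{l₀} ⊕ x_{l₁} ⊕ ⋯`, one `3XOR` per pair of variables; a last unpaired variable is
dropped. -/
def xorVars (φ : PLF {bf3Xor}) : List ℕ → PLF {bf3Xor}
  | a :: b :: l => app bf3Xor rfl ![var a, var b, xorVars φ l]
  | _ => φ

theorem eval_xorVars (φ : PLF {bf3Xor}) (v : ℕ → Bool) :
    ∀ l : List ℕ, Even l.length → (φ.xorVars l).eval v = φ.eval v + (l.map v).sum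
  | [], _ => by simp [xorVars]
  | [_], h => absurd h Nat.not_even_one
  | a :: b :: l, h => by
    have ih := eval_xorVars φ v l (by simpa [parity_simps] using h)
    change v a + (v b + (φ.xorVars l).eval v) = _
    rw [ih, List.map_cons, List.map_cons, List.sum_cons, List.sum_cons]
    ring

theorem pvars_xorVars (φ : PLF {bf3Xor}) :
    ∀ l : List ℕ, (φ.xorVars l).pvars ⊆ φ.pvars ∪ {i | i ∈ l}
  | [] => by simp [xorVars]
  | [_] => by simp [xorVars]
  | a :: b :: l => by
    intro i hi
    change i ∈ ⋃ k : Fin 3, (![var a, var b, φ.xorVars l] k).pvars at hi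
    obtain rfl | rfl | hi : i = a ∨ i = b ∨ i ∈ (φ.xorVars l).pvars := by
      simpa [Fin.exists_fin_succ, pvars] using hi
    · simp
    · simp
    · exact (pvars_xorVars φ l hi).imp_right
        fun h => List.mem_cons_of_mem _ (List.mem_cons_of_mem _ h)

end PLF

theorem stmt12 (PROP : Finset ℕ) (φ : PLF {bf3Xor}) (hφ : φ.pvars ⊆ ↑PROP)
    (E : Set ((ℕ → Bool) × Bool)) (hfin : E.Finite)
    (hE : uniqCharPL φ {ψ : PLF {bf3Xor} | ψ.pvars ⊆ ↑PROP} E) :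
    PROP.card - 1 ≤ E.ncard := by
  classical
  by_contra! hsmall
  -- The constant assignment `true` forces the subset below to have even size.
  set A : Finset (ℕ → Bool) := insert (fun _ => true) (hfin.toFinset.image Prod.fst)
  have hA : A.card < PROP.card := calc
    A.card ≤ (hfin.toFinset.image Prod.fst).card + 1 := Finset.card_insert_le _ _
    _ ≤ E.ncard + 1 := by grw [Finset.card_image_le, Set.ncard_eq_toFinset_card E hfin]
    _ < PROP.card := by omega
  obtain ⟨S, hSP, ⟨a, ha⟩, hS⟩ := PROP.exists_nonempty_subset_forall_sum_eq_zero A hA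
  have hSeven : Even S.toList.length := by
    have := hS _ (Finset.mem_insert_self _ _)
    rwa [Finset.sum_const, ← Bool.one_eq_true, nsmul_eq_mul, mul_one,
      CharP.cast_eq_zero_iff Bool 2, ← even_iff_two_dvd, ← Finset.length_toList] at this
  set ψ := φ.xorVars S.toList
  have hψ : ∀ v, ψ.eval v = φ.eval v + ∑ i ∈ S, v i := fun v => by
    rw [PLF.eval_xorVars _ _ _ hSeven, Finset.sum_map_toList]
  have hψP : ψ.pvars ⊆ PROP :=
    (PLF.pvars_xorVars φ _).trans (Set.union_subset hφ fun i hi => hSP (by simpa using hi))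
  have hfits : ∀ e ∈ E, ψ.fits e := fun e he => by
    rw [PLF.fits, hψ, hS e.1 (Finset.mem_insert_of_mem
      (Finset.mem_image_of_mem _ (hfin.mem_toFinset.2 he))), add_zero]
    exact hE.1 e he
  have hφψ := hE.2 ψ hψP hfits (Pi.single a true)
  rw [hψ, Finset.sum_pi_single', if_pos ha] at hφψ
  simp at hφψ
end

section
/- Let C1 = (C1, E1, λ1) and C2 = (C2, E2, λ2) be concept classes with C1 ≤_pc C2 via the reduction (f, h). If, for some concept c ∈ C1, every set of labeled examples that uniquely characterizes c within C1 has size at least n, then every set of labeled examples that uniquely characterizes f(c) within C2 also has size at least n. -/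
set_option maxHeartbeats 1000000

/-! Every example of a sample characterizing `f c` is either labeled alike by all `f c'`, and then
carries no information, or has, over `C1`, the same extension as some `e' ∈ E1`. Replacing the
latter examples by these `e'` and dropping the former gives a sample that characterizes `c` and is
no larger. -/

theorem Set.ncard_preimage_some_le {β : Type*} {t : Set (Option β)} (ht : t.Finite) :
    (some ⁻¹' t).ncard ≤ t.ncard :=
  calc (some ⁻¹' t).ncard = (some '' (some ⁻¹' t)).ncard :=
        (Set.ncard_image_of_injective _ (Option.some_injective β)).symm
    _ ≤ t.ncard := Set.ncard_le_ncard (Set.image_preimage_subset _ _) ht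

namespace PCRed

variable {C1 E1 C2 E2 : Type*} {l1 : C1 → Set E1} {l2 : C2 → Set E2} (r : PCRed l1 l2)

theorem valuation_eq_of_fc_valuation_eq {c c' : C1} (h : l2 (r.fc c') = l2 (r.fc c)) :
    l1 c' = l1 c := by
  ext e
  rw [r.cond1, r.cond1, h]

open Classical in
/-- `none` exactly on the examples labeled alike by all `r.fc c`
(the first two cases of `cond2`). -/
noncomputable def pullEx (s : E2 × Bool) : Option (E1 × Bool) :=
  if h : ∃ e' : E1, {c | s.1 ∈ l2 (r.fc c)} = {c | e' ∈ l1 c} then some (h.choose, s.2) else none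

theorem ccFits_iff_of_pullEx_eq_some {s : E2 × Bool} {x : E1 × Bool} (hs : r.pullEx s = some x)
    (c : C1) : ccFits l2 (r.fc c) s ↔ ccFits l1 c x := by
  unfold pullEx at hs
  split_ifs at hs with h
  cases hs
  exact iff_congr (Set.ext_iff.mp h.choose_spec c) Iff.rfl

theorem ccFits_iff_of_pullEx_eq_none {s : E2 × Bool} (hs : r.pullEx s = none) (c c' : C1) :
    ccFits l2 (r.fc c) s ↔ ccFits l2 (r.fc c') s := by
  unfold pullEx at hs
  split_ifs at hs with h
  rcases r.cond2 s.1 with hall | hnone | hex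
  · simp only [ccFits, hall]
  · simp only [ccFits, hnone]
  · exact absurd hex h

def pullSample (S : Set (E2 × Bool)) : Set (E1 × Bool) := some ⁻¹' (r.pullEx '' S)

theorem pullSample_finite {S : Set (E2 × Bool)} (hS : S.Finite) : (r.pullSample S).Finite :=
  (hS.image _).preimage (Option.some_injective _).injOn

theorem ncard_pullSample_le {S : Set (E2 × Bool)} (hS : S.Finite) :
    (r.pullSample S).ncard ≤ S.ncard :=
  (Set.ncard_preimage_some_le (hS.image _)).trans (Set.ncard_image_le hS)

theorem ccUniqChar_pullSample {c : C1} {S : Set (E2 × Bool)} (hS : ccUniqChar l2 (r.fc c) S) :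
    ccUniqChar l1 c (r.pullSample S) := by
  refine ⟨?_, fun c' hc' => r.valuation_eq_of_fc_valuation_eq (hS.2 _ fun s hs => ?_)⟩
  · rintro x ⟨s, hs, hsx⟩
    exact (r.ccFits_iff_of_pullEx_eq_some hsx c).mp (hS.1 s hs)
  · cases hsx : r.pullEx s with
    | none => exact (r.ccFits_iff_of_pullEx_eq_none hsx c c').mp (hS.1 s hs)
    | some x => exact (r.ccFits_iff_of_pullEx_eq_some hsx c').mpr (hc' x ⟨s, hs, hsx⟩)

end PCRed

theorem stmt13 {C1 : Type*} {E1 : Type*} {C2 : Type*} {E2 : Type*}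
    (l1 : C1 → Set E1) (l2 : C2 → Set E2) (r : PCRed l1 l2) (c : C1) (n : ℕ)
    (hc : ∀ S : Set (E1 × Bool), ccUniqChar l1 c S → S.Finite → n ≤ S.ncard) :
    ∀ S : Set (E2 × Bool), ccUniqChar l2 (r.fc c) S → S.Finite → n ≤ S.ncard := by
  intro S hS hSfin
  calc n ≤ (r.pullSample S).ncard := hc _ (r.ccUniqChar_pullSample hS) (r.pullSample_finite hSfin)
    _ ≤ S.ncard := r.ncard_pullSample_le hSfin
end

section
/- For all sets O, O' of Boolean functions with O ≼ O' and every finite set PROP of propositional variables, there is a PC-reduction from the concept class PL_O[PROP] to the concept class PL_{O'}[PROP], i.e., PL_O[PROP] ≤_pc PL_{O'}[PROP]. -/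
set_option maxHeartbeats 1000000

/-- The set of Boolean functions expressible by `PL_{O'}` formulas applied to arbitrary
`PL_{O'}` arguments, with variable control. -/
def exprSet (O' : Set BFun) : Set BFun :=
  {f | ∀ args : Fin f.arity → PLF O', ∃ ψ : PLF O',
    (∀ v, ψ.eval v = f.eval (fun i => (args i).eval v)) ∧
    ψ.pvars ⊆ ⋃ i, (args i).pvars}

lemma exprSet_clone (O' : Set BFun) : IsClone (exprSet O') := by
  constructor
  · intro n hn k args
    exact ⟨args k, fun v => rfl, Set.subset_iUnion (fun i => (args i).pvars) k⟩
  · intro f hf m hm g hg args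
    choose ψ hψ hψv using fun i => hg i args
    obtain ⟨χ, hχ, hχv⟩ := hf ψ
    refine ⟨χ, fun v => ?_, ?_⟩
    · rw [hχ v]; simp only [hψ]
    · exact hχv.trans (Set.iUnion_subset fun i => hψv i)

lemma subset_exprSet (O' : Set BFun) : O' ⊆ exprSet O' := by
  intro f hf args
  exact ⟨PLF.app f hf args, fun v => rfl, subset_refl _⟩

lemma cloneGen_subset_exprSet (O' : Set BFun) : cloneGen O' ⊆ exprSet O' :=
  Set.sInter_subset_of_mem ⟨exprSet_clone O', subset_exprSet O'⟩

lemma subset_cloneGen (O : Set BFun) : O ⊆ cloneGen O := by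
  intro f hf
  exact Set.mem_sInter.mpr fun C hC => hC.2 hf

lemma plfTranslate (O O' : Set BFun) (h : cloneLe O O') (φ : PLF O) :
    ∃ ψ : PLF O', (∀ v, ψ.eval v = φ.eval v) ∧ ψ.pvars ⊆ φ.pvars := by
  induction φ with
  | var n => exact ⟨PLF.var n, fun v => rfl, subset_refl _⟩
  | app f hf args ih =>
    choose ψ hψ hψv using ih
    have hf' : f ∈ exprSet O' :=
      cloneGen_subset_exprSet O' (h (subset_cloneGen O hf))
    obtain ⟨χ, hχ, hχv⟩ := hf' ψ
    refine ⟨χ, fun v => ?_, ?_⟩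
    · rw [hχ v]; show _ = PLF.eval v (PLF.app f hf args)
      simp only [PLF.eval, hψ]
    · exact hχv.trans (Set.iUnion_mono fun i => hψv i)

theorem stmt14 (O O' : Set BFun) (h : cloneLe O O') (PROP : Finset ℕ) :
    Nonempty (PCRed (plSem O PROP) (plSem O' PROP)) := by
  have key : ∀ c : {φ : PLF O // φ.pvars ⊆ ↑PROP},
      ∃ d : {ψ : PLF O' // ψ.pvars ⊆ ↑PROP},
        ∀ v, d.1.eval v = c.1.eval v := by
    rintro ⟨φ, hφ⟩
    obtain ⟨ψ, hψ, hψv⟩ := plfTranslate O O' h φ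
    exact ⟨⟨ψ, hψv.trans hφ⟩, hψ⟩
  choose fc hfc using key
  refine ⟨⟨fc, id, ?_, ?_⟩⟩
  · intro c e
    simp only [plSem, Set.mem_setOf_eq, hfc c, id]
  · intro e
    refine Or.inr (Or.inr ⟨e, ?_⟩)
    ext c
    simp only [plSem, Set.mem_setOf_eq, hfc c]
end

section
/- For every finite set PROP of propositional variables and fresh variable w ∉ PROP: (1) PL_{3XOR}[PROP] ≤_pc PL_{oxor}[PROP ∪ {w}], and (2) PL_{3XOR}[PROP] ≤_pc PL_{aimp}[PROP ∪ {w}]. -/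
set_option maxHeartbeats 1000000

/-!
Both connectives become a Boolean operation once a fresh variable `w` is fixed to a suitable
constant: `oxor(w, y, z) = y ⊕ z` when `w` is false, and `aimp(w, y, z) = y → z` when `w` is
true; from `→` (and `w` as the constant true) one gets `↔`, and `x ⊕ y ⊕ z = (x ↔ y) ↔ z`.
Translating each 3XOR-formula gate by gate therefore yields a formula that agrees with it
whenever `w` takes the simulating value, and is constant (true for `oxor`, false for `aimp`)
otherwise. The example map extends an assignment by that value of `w`; an assignment with the
other value of `w` is classified alike by all translated concepts, as the reduction allows.
-/

namespace PLF

variable {O : Set BFun}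

theorem eval_congr (φ : PLF O) {u v : ℕ → Bool} (h : ∀ n ∈ φ.pvars, u n = v n) :
    φ.eval u = φ.eval v := by
  induction φ with
  | var n => exact h n rfl
  | app f hf args ih =>
    exact congrArg f.eval (funext fun i => ih i fun n hn => h n (Set.mem_iUnion_of_mem i hn))

@[simp]
theorem eval_var (u : ℕ → Bool) (n : ℕ) : (var n : PLF O).eval u = u n := rfl

@[simp]
theorem pvars_var (n : ℕ) : (var n : PLF O).pvars = {n} := rfl

def oxor (a b c : PLF {bfOxor}) : PLF {bfOxor} := .app bfOxor rfl ![a, b, c]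

def aimp (a b c : PLF {bfAimp}) : PLF {bfAimp} := .app bfAimp rfl ![a, b, c]

@[simp]
theorem eval_oxor (a b c : PLF {bfOxor}) (u : ℕ → Bool) :
    (oxor a b c).eval u = (a.eval u || xor (b.eval u) (c.eval u)) := rfl

@[simp]
theorem eval_aimp (a b c : PLF {bfAimp}) (u : ℕ → Bool) :
    (aimp a b c).eval u = (a.eval u && (!b.eval u || c.eval u)) := rfl

@[simp]
theorem pvars_oxor (a b c : PLF {bfOxor}) :
    (oxor a b c).pvars = a.pvars ∪ b.pvars ∪ c.pvars := by
  change (⋃ i : Fin 3, (![a, b, c] i).pvars) = _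
  ext x
  simp [Fin.exists_fin_succ, or_assoc]

@[simp]
theorem pvars_aimp (a b c : PLF {bfAimp}) :
    (aimp a b c).pvars = a.pvars ∪ b.pvars ∪ c.pvars := by
  change (⋃ i : Fin 3, (![a, b, c] i).pvars) = _
  ext x
  simp [Fin.exists_fin_succ, or_assoc]

def xorArg {f : BFun} (hf : f ∈ ({bf3Xor} : Set BFun)) (i : Fin 3) : Fin f.arity :=
  Fin.cast (congrArg BFun.arity (Set.mem_singleton_iff.mp hf)).symm i

theorem eval_app_of_mem_3xor {f : BFun} (hf : f ∈ ({bf3Xor} : Set BFun))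
    (args : Fin f.arity → PLF {bf3Xor}) (u : ℕ → Bool) :
    (app f hf args).eval u =
      xor ((args (xorArg hf 0)).eval u)
        (xor ((args (xorArg hf 1)).eval u) ((args (xorArg hf 2)).eval u)) := by
  obtain rfl : f = bf3Xor := hf
  rfl

variable (leaf : ℕ → PLF O) (node : PLF O → PLF O → PLF O → PLF O)

def xorTranslate : PLF {bf3Xor} → PLF O
  | .var n => leaf n
  | .app _ hf args =>
    node (xorTranslate (args (xorArg hf 0))) (xorTranslate (args (xorArg hf 1)))
      (xorTranslate (args (xorArg hf 2)))

theorem eval_xorTranslate {u : ℕ → Bool} (hleaf : ∀ n, (leaf n).eval u = u n)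
    (hnode : ∀ A B C, (node A B C).eval u = xor (A.eval u) (xor (B.eval u) (C.eval u)))
    (φ : PLF {bf3Xor}) : (xorTranslate leaf node φ).eval u = φ.eval u := by
  induction φ with
  | var n => exact hleaf n
  | app f hf args ih => rw [xorTranslate, hnode, ih, ih, ih, eval_app_of_mem_3xor]

theorem eval_xorTranslate_of_const {u : ℕ → Bool} {c : Bool} (hleaf : ∀ n, (leaf n).eval u = c)
    (hnode : ∀ A B C, (node A B C).eval u = c) (φ : PLF {bf3Xor}) :
    (xorTranslate leaf node φ).eval u = c := by
  cases φ with
  | var n => exact hleaf n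
  | app f hf args => exact hnode _ _ _

theorem pvars_xorTranslate_subset (S : Set ℕ) (hleaf : ∀ n, (leaf n).pvars ⊆ S ∪ {n})
    (hnode : ∀ A B C, (node A B C).pvars ⊆ S ∪ (A.pvars ∪ B.pvars ∪ C.pvars))
    (φ : PLF {bf3Xor}) : (xorTranslate leaf node φ).pvars ⊆ S ∪ φ.pvars := by
  induction φ with
  | var n => exact hleaf n
  | app f hf args ih =>
    have harg : ∀ i, (xorTranslate leaf node (args i)).pvars ⊆ S ∪ (app f hf args).pvars :=
      fun i => (ih i).trans (Set.union_subset_union_right S (Set.subset_iUnion_of_subset i le_rfl))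
    refine (hnode _ _ _).trans (Set.union_subset Set.subset_union_left ?_)
    exact Set.union_subset (Set.union_subset (harg _) (harg _)) (harg _)

end PLF

def PCRed.ofGuardedTranslation {O O' : Set BFun} {PROP : Finset ℕ} {w : ℕ} (hw : w ∉ PROP)
    (τ : PLF O → PLF O') (b c : Bool) (hvars : ∀ φ, (τ φ).pvars ⊆ {w} ∪ φ.pvars)
    (heval : ∀ φ u, u w = b → (τ φ).eval u = φ.eval u)
    (hconst : ∀ φ u, u w ≠ b → (τ φ).eval u = c) :
    PCRed (plSem O PROP) (plSem O' (insert w PROP)) where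
  fc φ := ⟨τ φ.1, (hvars φ.1).trans (by
    rw [Finset.coe_insert, Set.insert_eq]; exact Set.union_subset_union_right _ φ.2)⟩
  he e x := if h : x.1 ∈ PROP then e ⟨x.1, h⟩ else b
  cond1 φ e := by
    have hagree : ∀ n ∈ φ.1.pvars, extAssign (insert w PROP)
        (fun x => if h : x.1 ∈ PROP then e ⟨x.1, h⟩ else b) n = extAssign PROP e n := by
      intro n hn
      have hnP : n ∈ PROP := φ.2 hn
      simp [extAssign, hnP]
    have hwb : extAssign (insert w PROP)
        (fun x => if h : x.1 ∈ PROP then e ⟨x.1, h⟩ else b) w = b := by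
      simp [extAssign, hw]
    simp only [plSem, Set.mem_ofPred_eq, heval _ _ hwb, φ.1.eval_congr hagree]
  cond2 e := by
    by_cases hwb : extAssign (insert w PROP) e w = b
    · refine Or.inr (Or.inr ⟨fun x => e ⟨x.1, Finset.mem_insert_of_mem x.2⟩, ?_⟩)
      ext φ
      have hagree : ∀ n ∈ φ.1.pvars, extAssign (insert w PROP) e n =
          extAssign PROP (fun x => e ⟨x.1, Finset.mem_insert_of_mem x.2⟩) n := by
        intro n hn
        have hnP : n ∈ PROP := φ.2 hn
        simp [extAssign, hnP]
      simp only [plSem, Set.mem_ofPred_eq, heval _ _ hwb, φ.1.eval_congr hagree]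
    · cases c
      · exact Or.inr (Or.inl fun φ => by simp [plSem, hconst _ _ hwb])
      · exact Or.inl fun φ => by simp [plSem, hconst _ _ hwb]

namespace PLF

variable {w : ℕ} {u : ℕ → Bool}

def xorVia (w : ℕ) (a b : PLF {bfOxor}) : PLF {bfOxor} := oxor (var w) a b

def iffVia (w : ℕ) (a b : PLF {bfAimp}) : PLF {bfAimp} :=
  aimp (aimp (var w) a b) (var w) (aimp (var w) b a)

theorem eval_xorVia_of_false (hu : u w = false) (a b : PLF {bfOxor}) :
    (xorVia w a b).eval u = xor (a.eval u) (b.eval u) := by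
  simp [xorVia, hu]

theorem eval_xorVia_of_true (hu : u w = true) (a b : PLF {bfOxor}) :
    (xorVia w a b).eval u = true := by
  simp [xorVia, hu]

theorem eval_iffVia_of_true (hu : u w = true) (a b : PLF {bfAimp}) :
    (iffVia w a b).eval u = !xor (a.eval u) (b.eval u) := by
  simp only [iffVia, eval_aimp, eval_var, hu]
  cases a.eval u <;> cases b.eval u <;> rfl

theorem eval_iffVia_of_false (hu : u w = false) (a b : PLF {bfAimp}) :
    (iffVia w a b).eval u = false := by
  simp [iffVia, hu]

theorem pvars_xorVia (w : ℕ) (a b : PLF {bfOxor}) :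
    (xorVia w a b).pvars = {w} ∪ a.pvars ∪ b.pvars := by
  simp [xorVia]

theorem pvars_iffVia (w : ℕ) (a b : PLF {bfAimp}) :
    (iffVia w a b).pvars = {w} ∪ a.pvars ∪ b.pvars := by
  simp only [iffVia, pvars_aimp, pvars_var]
  tauto_set

def oxorTranslation (w : ℕ) : PLF {bf3Xor} → PLF {bfOxor} :=
  xorTranslate (fun n => xorVia w (var n) (var w)) fun A B C => xorVia w A (xorVia w B C)

def aimpTranslation (w : ℕ) : PLF {bf3Xor} → PLF {bfAimp} :=
  xorTranslate (fun n => aimp (var w) (var w) (var n)) fun A B C => iffVia w (iffVia w A B) C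

theorem pvars_oxorTranslation_subset (w : ℕ) (φ : PLF {bf3Xor}) :
    (oxorTranslation w φ).pvars ⊆ {w} ∪ φ.pvars := by
  refine pvars_xorTranslate_subset _ _ _ (fun n => ?_) (fun A B C => ?_) φ <;>
  · simp only [pvars_xorVia, pvars_var]
    tauto_set

theorem pvars_aimpTranslation_subset (w : ℕ) (φ : PLF {bf3Xor}) :
    (aimpTranslation w φ).pvars ⊆ {w} ∪ φ.pvars := by
  refine pvars_xorTranslate_subset _ _ _ (fun n => ?_) (fun A B C => ?_) φ
  · simp only [pvars_aimp, pvars_var]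
    tauto_set
  · simp only [pvars_iffVia]
    tauto_set

theorem eval_oxorTranslation_of_false (hu : u w = false) (φ : PLF {bf3Xor}) :
    (oxorTranslation w φ).eval u = φ.eval u :=
  eval_xorTranslate _ _ (by simp [eval_xorVia_of_false hu, hu])
    (by simp [eval_xorVia_of_false hu]) φ

theorem eval_oxorTranslation_of_true (hu : u w = true) (φ : PLF {bf3Xor}) :
    (oxorTranslation w φ).eval u = true :=
  eval_xorTranslate_of_const _ _ (fun _ => eval_xorVia_of_true hu _ _)
    (fun _ _ _ => eval_xorVia_of_true hu _ _) φ

theorem eval_aimpTranslation_of_true (hu : u w = true) (φ : PLF {bf3Xor}) :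
    (aimpTranslation w φ).eval u = φ.eval u :=
  eval_xorTranslate _ _ (by simp [hu]) (by simp [eval_iffVia_of_true hu]) φ

theorem eval_aimpTranslation_of_false (hu : u w = false) (φ : PLF {bf3Xor}) :
    (aimpTranslation w φ).eval u = false :=
  eval_xorTranslate_of_const _ _ (by simp [hu]) (fun _ _ _ => eval_iffVia_of_false hu _ _) φ

end PLF

theorem stmt15 (PROP : Finset ℕ) (w : ℕ) (hw : w ∉ PROP) :
    Nonempty (PCRed (plSem {bf3Xor} PROP) (plSem {bfOxor} (insert w PROP))) ∧
    Nonempty (PCRed (plSem {bf3Xor} PROP) (plSem {bfAimp} (insert w PROP))) :=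
  ⟨⟨.ofGuardedTranslation hw (PLF.oxorTranslation w) false true
      (PLF.pvars_oxorTranslation_subset w) (fun φ _ hu => PLF.eval_oxorTranslation_of_false hu φ)
      (fun φ _ hu => PLF.eval_oxorTranslation_of_true (by simpa using hu) φ)⟩,
    ⟨.ofGuardedTranslation hw (PLF.aimpTranslation w) true false
      (PLF.pvars_aimpTranslation_subset w) (fun φ _ hu => PLF.eval_aimpTranslation_of_true hu φ)
      (fun φ _ hu => PLF.eval_aimpTranslation_of_false (by simpa using hu) φ)⟩⟩
end
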